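/- arXiv:1905.08272 — 11 statements merged into one kernel-verified Lean document; each statement's English description precedes it below -/
import Mathlib

section
/- Let X and Y be Banach spaces and T : X → Y a compact operator. If every functional in (ker T)^⊥ attains its norm on X, then T attains its norm. -/
/-!
By compactness, the norm attains its maximum on the closure of `T '' closedBall 0 1` at some `y`,
and then `‖y‖ = ‖T‖`. For a norming functional `g` of `y`, the functional `g ∘ T` vanishes on
`ker T` and has norm `‖T‖`, since `y` is a limit of images of the unit ball. A unit vector at which
`g ∘ T` attains its norm is then one at which `T` attains its norm.
-/

open Metric

namespace ContinuousLinearMap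

variable {𝕜 X Y : Type*} [NontriviallyNormedField 𝕜] [NormedAddCommGroup X] [NormedSpace 𝕜 X]
  [NormedAddCommGroup Y] [NormedSpace 𝕜 Y]

theorem norm_le_opNorm_of_mem_closure_image_closedBall (T : X →L[𝕜] Y) {y : Y}
    (hy : y ∈ closure (T '' closedBall 0 1)) : ‖y‖ ≤ ‖T‖ := by
  refine closure_minimal ?_ (isClosed_le continuous_norm continuous_const) hy
  rintro _ ⟨x, hx, rfl⟩
  exact T.le_of_opNorm_le_of_le le_rfl (mem_closedBall_zero_iff.mp hx) |>.trans_eq (mul_one _)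

theorem norm_apply_le_opNorm_comp_of_mem_closure_image_closedBall (T : X →L[𝕜] Y)
    (g : Y →L[𝕜] 𝕜) {y : Y} (hy : y ∈ closure (T '' closedBall 0 1)) :
    ‖g y‖ ≤ ‖g.comp T‖ :=
  (g.comp T).norm_le_opNorm_of_mem_closure_image_closedBall <| by
    rw [coe_comp, Set.image_comp]
    exact map_mem_closure g.continuous hy (Set.mapsTo_image g _)

end ContinuousLinearMap

theorem IsCompactOperator.exists_mem_closure_image_closedBall_norm_eq_opNorm
    {𝕜 X Y : Type*} [RCLike 𝕜] [NormedAddCommGroup X] [NormedSpace 𝕜 X]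
    [NormedAddCommGroup Y] [NormedSpace 𝕜 Y] {T : X →L[𝕜] Y} (hT : IsCompactOperator T) :
    ∃ y ∈ closure (T '' closedBall 0 1), ‖y‖ = ‖T‖ := by
  obtain ⟨y, hyK, hmax⟩ := (hT.isCompact_closure_image_closedBall 1).exists_isMaxOn
    ((nonempty_closedBall.mpr zero_le_one).image T).closure continuous_norm.continuousOn
  refine ⟨y, hyK, le_antisymm (T.norm_le_opNorm_of_mem_closure_image_closedBall hyK) ?_⟩
  refine T.opNorm_le_of_unit_norm (norm_nonneg y) fun x hx => hmax (subset_closure ?_)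
  exact ⟨x, mem_closedBall_zero_iff.mpr hx.le, rfl⟩

theorem statement_3_general
    {X Y : Type*} [NormedAddCommGroup X] [NormedSpace ℝ X]
    [NormedAddCommGroup Y] [NormedSpace ℝ Y]
    (T : X →L[ℝ] Y) (hT : IsCompactOperator (⇑T))
    (hNA : ∀ f : X →L[ℝ] ℝ, (∀ z ∈ LinearMap.ker (T : X →ₗ[ℝ] Y), f z = 0) →
      ∃ x : X, ‖x‖ = 1 ∧ |f x| = ‖f‖) :
    ∃ x : X, ‖x‖ = 1 ∧ ‖T x‖ = ‖T‖ := by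
  obtain ⟨y, hyK, hyT⟩ := hT.exists_mem_closure_image_closedBall_norm_eq_opNorm
  obtain ⟨g, hg1, hgy⟩ := exists_dual_vector'' ℝ y
  obtain ⟨x, hx1, hfx⟩ := hNA (g.comp T) fun z hz => by
    simp [show T z = 0 from hz]
  refine ⟨x, hx1, le_antisymm (T.le_of_opNorm_le_of_le le_rfl hx1.le |>.trans_eq (mul_one _)) ?_⟩
  calc ‖T‖ = ‖g y‖ := by rw [hgy, hyT]; simp
    _ ≤ ‖g.comp T‖ := T.norm_apply_le_opNorm_comp_of_mem_closure_image_closedBall g hyK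
    _ = ‖g (T x)‖ := by rw [← hfx, Real.norm_eq_abs]; rfl
    _ ≤ ‖T x‖ := g.le_of_opNorm_le_of_le hg1 le_rfl |>.trans_eq (one_mul _)

theorem statement_3
    {X Y : Type*} [NormedAddCommGroup X] [NormedSpace ℝ X] [CompleteSpace X]
    [NormedAddCommGroup Y] [NormedSpace ℝ Y] [CompleteSpace Y]
    (T : X →L[ℝ] Y) (hT : IsCompactOperator (⇑T))
    (hNA : ∀ f : X →L[ℝ] ℝ, (∀ z ∈ LinearMap.ker (T : X →ₗ[ℝ] Y), f z = 0) →
      ∃ x : X, ‖x‖ = 1 ∧ |f x| = ‖f‖) :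
    ∃ x : X, ‖x‖ = 1 ∧ ‖T x‖ = ‖T‖ :=
  statement_3_general T hT hNA
end

section
/- If X is a non-smooth Banach space (i.e., there exist a unit vector x₀ ∈ X and two distinct norm-one functionals f, g ∈ X* with f(x₀) = g(x₀) = 1), then for every Banach space Y of dimension at least 2 there exists a norm attaining bounded linear operator T : X → Y of rank two. -/
/-!
For unit vectors `u, v` spanning a plane of `Y`, take `T x = ½ (f + g) x • u + ½ (f - g) x • v`.
Since `|a + b| + |a - b| = 2 max (|a|, |b|)`, we get `‖T‖ ≤ 1`, while `T x₀ = u`; so `T` attains its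
norm at `x₀`. Its range is `span {u, v}`: `f - g` vanishes at `x₀` but not everywhere, since `f ≠ g`.
-/

open Submodule in
theorem LinearMap.range_smulRight_add_smulRight {K X Y : Type*} [Field K] [AddCommGroup X]
    [Module K X] [AddCommGroup Y] [Module K Y] {φ ψ : X →ₗ[K] K} {x z : X}
    (hφx : φ x ≠ 0) (hψx : ψ x = 0) (hψz : ψ z ≠ 0) (u v : Y) :
    range (φ.smulRight u + ψ.smulRight v) = span K {u, v} := by
  set T := φ.smulRight u + ψ.smulRight v
  have hT (y : X) : T y = φ y • u + ψ y • v := rfl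
  refine le_antisymm ?_ (span_le.mpr ?_)
  · rintro _ ⟨y, rfl⟩
    rw [hT]
    exact add_mem (smul_mem _ _ (subset_span (by simp))) (smul_mem _ _ (subset_span (by simp)))
  · have hu : u = (φ x)⁻¹ • T x := by simp [hT, hψx, smul_smul, hφx]
    have hv : v = (ψ z)⁻¹ • (T z - φ z • u) := by simp [hT, smul_smul, hψz]
    have hu_mem : u ∈ range T := hu ▸ smul_mem _ _ (mem_range_self T x)
    rintro w (rfl | rfl | _)
    · exact hu_mem
    · rw [hv]
      exact smul_mem _ _ (sub_mem (mem_range_self T z) (smul_mem _ _ hu_mem))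

theorem finrank_span_pair {K V : Type*} [DivisionRing K] [AddCommGroup V] [Module K V] {u v : V}
    (h : LinearIndependent K ![u, v]) : Module.finrank K (Submodule.span K {u, v}) = 2 := by
  rw [← Matrix.range_cons_cons_empty u v ![], finrank_span_eq_card h, Fintype.card_fin]

theorem LinearIndependent.inv_norm_smul {𝕜 ι E : Type*} [RCLike 𝕜] [NormedAddCommGroup E]
    [NormedSpace 𝕜 E] {v : ι → E} (hv : LinearIndependent 𝕜 v) :
    LinearIndependent 𝕜 fun i ↦ (‖v i‖⁻¹ : 𝕜) • v i :=
  hv.units_smul fun i ↦ Units.mk0 _ <| inv_ne_zero <| RCLike.ofReal_ne_zero.mpr <|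
    norm_ne_zero_iff.mpr (hv.ne_zero i)

theorem exists_linearIndependent_pair_norm_eq_one {𝕜 E : Type*} [RCLike 𝕜] [NormedAddCommGroup E]
    [NormedSpace 𝕜 E] (h : 1 < Module.rank 𝕜 E) :
    ∃ u v : E, ‖u‖ = 1 ∧ ‖v‖ = 1 ∧ LinearIndependent 𝕜 ![u, v] := by
  have : Nontrivial E := rank_pos_iff_nontrivial.mp (zero_lt_one.trans h)
  obtain ⟨x, hx⟩ := exists_ne (0 : E)
  obtain ⟨y, hxy⟩ := exists_linearIndependent_pair_of_one_lt_rank h hx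
  refine ⟨_, _, norm_smul_inv_norm (𝕜 := 𝕜) hx, norm_smul_inv_norm (𝕜 := 𝕜) (hxy.ne_zero 1), ?_⟩
  convert hxy.inv_norm_smul with i
  fin_cases i <;> rfl

theorem abs_add_add_abs_sub_le {a b c : ℝ} (ha : |a| ≤ c) (hb : |b| ≤ c) :
    |a + b| + |a - b| ≤ 2 * c := by
  rw [abs_le] at ha hb
  rcases abs_cases (a + b) with ⟨h₁, _⟩ | ⟨h₁, _⟩ <;>
    rcases abs_cases (a - b) with ⟨h₂, _⟩ | ⟨h₂, _⟩ <;> linarith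

theorem ContinuousLinearMap.norm_half_add_smulRight_add_half_sub_smulRight_le
    {X Y : Type*} [SeminormedAddCommGroup X] [NormedSpace ℝ X] [SeminormedAddCommGroup Y]
    [NormedSpace ℝ Y] {f g : X →L[ℝ] ℝ} {u v : Y}
    (hf : ‖f‖ ≤ 1) (hg : ‖g‖ ≤ 1) (hu : ‖u‖ ≤ 1) (hv : ‖v‖ ≤ 1) :
    ‖((2⁻¹ : ℝ) • (f + g)).smulRight u + ((2⁻¹ : ℝ) • (f - g)).smulRight v‖ ≤ 1 := by
  refine opNorm_le_bound _ zero_le_one fun x ↦ ?_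
  have hfx : |f x| ≤ ‖x‖ := (f.le_opNorm x).trans (mul_le_of_le_one_left (norm_nonneg x) hf)
  have hgx : |g x| ≤ ‖x‖ := (g.le_opNorm x).trans (mul_le_of_le_one_left (norm_nonneg x) hg)
  calc _ = ‖(2⁻¹ * (f x + g x)) • u + (2⁻¹ * (f x - g x)) • v‖ := rfl
    _ ≤ |2⁻¹ * (f x + g x)| * 1 + |2⁻¹ * (f x - g x)| * 1 := by
        refine (norm_add_le _ _).trans (add_le_add ?_ ?_) <;> rw [norm_smul, Real.norm_eq_abs] <;>
          gcongr
    _ = 2⁻¹ * (|f x + g x| + |f x - g x|) := by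
        rw [abs_mul, abs_mul, abs_of_pos (by norm_num : (0 : ℝ) < 2⁻¹)]; ring
    _ ≤ 1 * ‖x‖ := by linarith [abs_add_add_abs_sub_le hfx hgx]

theorem statement_5_general
    {X : Type u} [NormedAddCommGroup X] [NormedSpace ℝ X]
    (hns : ∃ (x₀ : X) (f g : X →L[ℝ] ℝ), ‖x₀‖ = 1 ∧ ‖f‖ = 1 ∧ ‖g‖ = 1 ∧
      f ≠ g ∧ f x₀ = 1 ∧ g x₀ = 1) :
    ∀ (Y : Type v) [NormedAddCommGroup Y] [NormedSpace ℝ Y] [CompleteSpace Y],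
      2 ≤ Module.rank ℝ Y →
      ∃ T : X →L[ℝ] Y, Module.finrank ℝ ↥(LinearMap.range (T : X →ₗ[ℝ] Y)) = 2 ∧
        ∃ x : X, ‖x‖ = 1 ∧ ‖T x‖ = ‖T‖ := by
  obtain ⟨x₀, f, g, hx₀, hf, hg, hfg, hfx₀, hgx₀⟩ := hns
  intro Y _ _ _ hrank
  obtain ⟨u, v, hu, hv, huv⟩ := exists_linearIndependent_pair_norm_eq_one (𝕜 := ℝ)
    ((by norm_num : (1 : Cardinal) < 2).trans_le hrank)
  obtain ⟨z, hz⟩ : ∃ z, f z ≠ g z := DFunLike.ne_iff.mp hfg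
  set φ : X →L[ℝ] ℝ := (2⁻¹ : ℝ) • (f + g)
  set ψ : X →L[ℝ] ℝ := (2⁻¹ : ℝ) • (f - g)
  set T := φ.smulRight u + ψ.smulRight v
  have hTx₀ : T x₀ = u := by norm_num [T, φ, ψ, hfx₀, hgx₀]
  have hT : ‖T‖ ≤ 1 := ContinuousLinearMap.norm_half_add_smulRight_add_half_sub_smulRight_le
    hf.le hg.le hu.le hv.le
  have hrange : LinearMap.range (T : X →ₗ[ℝ] Y) = Submodule.span ℝ {u, v} :=
    LinearMap.range_smulRight_add_smulRight (φ := (φ : X →ₗ[ℝ] ℝ)) (ψ := ψ) (x := x₀) (z := z)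
      (by norm_num [φ, hfx₀, hgx₀]) (by norm_num [ψ, hfx₀, hgx₀])
      (by simpa [ψ, sub_eq_zero] using hz) u v
  refine ⟨T, by rw [hrange, finrank_span_pair huv], x₀, hx₀, le_antisymm ?_ (by rwa [hTx₀, hu])⟩
  simpa [hx₀] using T.le_opNorm x₀

theorem statement_5
    {X : Type u} [NormedAddCommGroup X] [NormedSpace ℝ X] [CompleteSpace X]
    (hns : ∃ (x₀ : X) (f g : X →L[ℝ] ℝ), ‖x₀‖ = 1 ∧ ‖f‖ = 1 ∧ ‖g‖ = 1 ∧
      f ≠ g ∧ f x₀ = 1 ∧ g x₀ = 1) :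
    ∀ (Y : Type v) [NormedAddCommGroup Y] [NormedSpace ℝ Y] [CompleteSpace Y],
      2 ≤ Module.rank ℝ Y →
      ∃ T : X →L[ℝ] Y, Module.finrank ℝ ↥(LinearMap.range (T : X →ₗ[ℝ] Y)) = 2 ∧
        ∃ x : X, ‖x‖ = 1 ∧ ‖T x‖ = ‖T‖ :=
  statement_5_general hns
end

section
/- Let E be a two-dimensional normed space, e₁ ∈ E a unit vector, e₁* a norm-one functional with e₁*(e₁) = 1, and e₂ a unit vector in the kernel of e₁*. For 0 < τ < 1, let T_τ : E → E be the linear operator with T_τ(e₁) = e₁ and T_τ(e₂) = τ e₂. Then for every compact set K ⊆ E with sup_{x ∈ K} |e₁*(x)| < 1, there exists 0 < τ < 1 such that T_τ(K) is contained in the open unit ball of E. -/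
/-!
Since `e₁star e₁ = 1` and the kernel of `e₁star` is the line `ℝ e₂`, every such `T` is
`x ↦ e₁star x • e₁ + τ • (x - e₁star x • e₁)`. Hence on `K`, which lies in a ball of radius `R`,
`‖T x‖ ≤ |e₁star x| + τ (‖x‖ + |e₁star x|) ≤ c + τ (R + 1)`, which is `< 1` for small `τ`.
-/

open Filter Topology

theorem LinearMap.ker_eq_span_singleton_of_finrank_eq_two {K V : Type*} [Field K] [AddCommGroup V]
    [Module K V] (hdim : Module.finrank K V = 2) {φ : V →ₗ[K] K} (hφ : φ ≠ 0) {v : V}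
    (hv : v ≠ 0) (hker : φ v = 0) : LinearMap.ker φ = K ∙ v := by
  have : FiniteDimensional K V := Module.finite_of_finrank_eq_succ hdim
  have hrange : Module.finrank K (LinearMap.range φ) = 1 := by
    rw [LinearMap.range_eq_top.2 (φ.surjective_of_ne_zero hφ), finrank_top, Module.finrank_self]
  have hfinrank : Module.finrank K (LinearMap.ker φ) = 1 := by
    have := φ.finrank_range_add_finrank_ker
    omega
  symm
  refine Submodule.eq_of_le_of_finrank_eq ?_ ?_
  · rwa [Submodule.span_singleton_le_iff_mem]
  · rw [hfinrank, finrank_span_singleton hv]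

theorem LinearMap.apply_eq_of_ker_le_span_singleton {R M : Type*} [CommRing R] [AddCommGroup M]
    [Module R M] {φ : M →ₗ[R] R} {e₁ e₂ : M} (he₁ : φ e₁ = 1) (hker : LinearMap.ker φ ≤ R ∙ e₂)
    {T : M →ₗ[R] M} {τ : R} (hTe₁ : T e₁ = e₁) (hTe₂ : T e₂ = τ • e₂) (x : M) :
    T x = φ x • e₁ + τ • (x - φ x • e₁) := by
  obtain ⟨a, ha⟩ : ∃ a : R, a • e₂ = x - φ x • e₁ :=
    Submodule.mem_span_singleton.1 <| hker <| by simp [he₁]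
  calc T x = T (φ x • e₁ + a • e₂) := by rw [ha, add_sub_cancel]
    _ = φ x • e₁ + τ • (x - φ x • e₁) := by
      rw [map_add, map_smul, map_smul, hTe₁, hTe₂, ← ha, smul_comm]

theorem exists_pos_lt_one_mul_lt {ε : ℝ} (hε : 0 < ε) (M : ℝ) :
    ∃ τ : ℝ, 0 < τ ∧ τ < 1 ∧ τ * M < ε := by
  have hsmall : ∀ᶠ τ in 𝓝 (0 : ℝ), τ < 1 ∧ τ * M < ε :=
    (gt_mem_nhds one_pos).and <|
      ((continuous_id.mul continuous_const).tendsto' 0 0 (by simp)).eventually (gt_mem_nhds hε)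
  obtain ⟨τ, ⟨hτ1, hτM⟩, hτ0⟩ := ((eventually_nhdsWithin_of_eventually_nhds hsmall).and
    (self_mem_nhdsWithin : ∀ᶠ τ in 𝓝[>] (0 : ℝ), 0 < τ)).exists
  exact ⟨τ, hτ0, hτ1, hτM⟩

theorem statement_6_general
    {E : Type*} [NormedAddCommGroup E] [NormedSpace ℝ E]
    (hdim : Module.finrank ℝ E = 2)
    (e₁ : E) (he₁ : ‖e₁‖ = 1)
    (e₁star : E →L[ℝ] ℝ) (heval : e₁star e₁ = 1)
    (e₂ : E) (he₂ : ‖e₂‖ = 1) (he₂ker : e₁star e₂ = 0)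
    (K : Set E) (hK : IsCompact K)
    (hsup : ∃ c < (1 : ℝ), ∀ x ∈ K, |e₁star x| ≤ c) :
    ∃ τ : ℝ, 0 < τ ∧ τ < 1 ∧
      ∀ T : E →L[ℝ] E, T e₁ = e₁ → T e₂ = τ • e₂ →
        ∀ x ∈ K, ‖T x‖ < 1 := by
  obtain ⟨c, hc, hcK⟩ := hsup
  obtain ⟨R, hR⟩ := isBounded_iff_forall_norm_le.1 hK.isBounded
  have hker : LinearMap.ker (e₁star : E →ₗ[ℝ] ℝ) = ℝ ∙ e₂ :=
    LinearMap.ker_eq_span_singleton_of_finrank_eq_two hdim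
      (fun h ↦ by simpa [heval] using LinearMap.congr_fun h e₁)
      (norm_ne_zero_iff.1 (by simp [he₂])) he₂ker
  obtain ⟨τ, hτ0, hτ1, hτR⟩ := exists_pos_lt_one_mul_lt (sub_pos.2 hc) (R + 1)
  refine ⟨τ, hτ0, hτ1, fun T hTe₁ hTe₂ x hx ↦ ?_⟩
  have hTx : T x = e₁star x • e₁ + τ • (x - e₁star x • e₁) :=
    LinearMap.apply_eq_of_ker_le_span_singleton heval hker.le (T := (T : E →ₗ[ℝ] E)) hTe₁ hTe₂ x
  calc ‖T x‖ ≤ |e₁star x| + τ * (‖x‖ + |e₁star x|) := by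
        rw [hTx]
        refine (norm_add_le _ _).trans (add_le_add (by simp [norm_smul, he₁]) ?_)
        rw [norm_smul, Real.norm_of_nonneg hτ0.le]
        gcongr
        exact (norm_sub_le _ _).trans_eq (by simp [norm_smul, he₁])
    _ ≤ c + τ * (R + 1) := by gcongr; exacts [hcK x hx, hR x hx, (hcK x hx).trans hc.le]
    _ < 1 := by linarith

theorem statement_6
    {E : Type*} [NormedAddCommGroup E] [NormedSpace ℝ E]
    (hdim : Module.finrank ℝ E = 2)
    (e₁ : E) (he₁ : ‖e₁‖ = 1)
    (e₁star : E →L[ℝ] ℝ) (he₁star : ‖e₁star‖ = 1) (heval : e₁star e₁ = 1)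
    (e₂ : E) (he₂ : ‖e₂‖ = 1) (he₂ker : e₁star e₂ = 0)
    (K : Set E) (hK : IsCompact K)
    (hsup : ∃ c < (1 : ℝ), ∀ x ∈ K, |e₁star x| ≤ c) :
    ∃ τ : ℝ, 0 < τ ∧ τ < 1 ∧
      ∀ T : E →L[ℝ] E, T e₁ = e₁ → T e₂ = τ • e₂ →
        ∀ x ∈ K, ‖T x‖ < 1 :=
  statement_6_general hdim e₁ he₁ e₁star heval e₂ he₂ he₂ker K hK hsup
end

section
/- Let Y be a two-dimensional normed space, x₁, x₂ ∈ Y linearly independent smooth points of the unit sphere with supporting functionals x₁*, x₂* (norm one, x_i*(x_i) = 1) that are linearly independent. Let y be a unit vector of the form y = a₁x₁ + a₂x₂ with a₁, a₂ > 0. Then every norm-one functional f with f(y) = 1 lies in the cone {c₁ x₁* + c₂ x₂* : c₁, c₂ ≥ 0}. -/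
/-!
As `x₂*` and `f` have norm one, `x₂*(y) f(x₂) ≤ 1`; by Cramer's rule
`1 - x₂*(y) f(x₂) = a₁ c₁ (1 - x₁*(x₂) x₂*(x₁))`. Smoothness at `x₁` makes `|x₂*(x₁)| < 1`, so
the last factor is positive and `c₁ ≥ 0`; symmetrically `c₂ ≥ 0`.
-/

open Module

theorem exists_eq_smul_add_smul_of_finrank_eq_two {K V : Type*} [DivisionRing K]
    [AddCommGroup V] [Module K V] (hV : finrank K V = 2) {u v : V}
    (huv : LinearIndependent K ![u, v]) (w : V) : ∃ a b : K, w = a • u + b • v := by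
  have hspan := huv.span_eq_top_of_card_eq_finrank (by simp [hV])
  rw [Matrix.range_cons_cons_empty] at hspan
  obtain ⟨a, b, h⟩ := Submodule.mem_span_pair.mp (hspan ▸ Submodule.mem_top : w ∈ _)
  exact ⟨a, b, h.symm⟩

theorem ContinuousLinearMap.finrank_dual_eq {𝕜 E : Type*} [NontriviallyNormedField 𝕜]
    [CompleteSpace 𝕜] [NormedAddCommGroup E] [NormedSpace 𝕜 E] [FiniteDimensional 𝕜 E] :
    finrank 𝕜 (E →L[𝕜] 𝕜) = finrank 𝕜 E := by
  rw [← (LinearMap.toContinuousLinearMap : (E →ₗ[𝕜] 𝕜) ≃ₗ[𝕜] _).finrank_eq,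
    finrank_linearMap, finrank_self, mul_one]

section

variable {E : Type*} [NormedAddCommGroup E] [NormedSpace ℝ E]

theorem ContinuousLinearMap.abs_apply_le_one {g : E →L[ℝ] ℝ} {x : E} (hg : ‖g‖ ≤ 1)
    (hx : ‖x‖ ≤ 1) : |g x| ≤ 1 := by
  simpa using (g.le_of_opNorm_le hg x).trans (by simpa using hx)

theorem abs_apply_lt_one_of_unique_support {x : E} {g h : E →L[ℝ] ℝ}
    (hsmooth : ∀ k : E →L[ℝ] ℝ, ‖k‖ = 1 → k x = 1 → k = g)
    (hgh : LinearIndependent ℝ ![g, h]) (hh : ‖h‖ = 1) (hx : ‖x‖ ≤ 1) : |h x| < 1 := by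
  have hne : ∀ a : ℝ, a • h ≠ g := by simpa using (linearIndependent_fin2.mp hgh).2
  refine (h.abs_apply_le_one hh.le hx).lt_of_ne fun habs => ?_
  rcases abs_eq zero_le_one |>.mp habs with h1 | h1
  · exact hne 1 (by simpa using hsmooth h hh h1)
  · exact hne (-1) ((neg_one_smul ℝ h).trans (hsmooth (-h) (by rwa [norm_neg]) (by simp [h1])))

theorem coeff_nonneg_of_apply_eq_one {x₁ x₂ y : E} {g₁ g₂ f : E →L[ℝ] ℝ} {a₁ a₂ c₁ c₂ : ℝ}
    (hg₂ : ‖g₂‖ ≤ 1) (hf : ‖f‖ ≤ 1) (hx₂ : ‖x₂‖ ≤ 1) (hy : ‖y‖ ≤ 1)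
    (hg₁x₁ : g₁ x₁ = 1) (hg₂x₂ : g₂ x₂ = 1) (hcross : g₁ x₂ * g₂ x₁ < 1)
    (ha₁ : 0 < a₁) (hy_eq : y = a₁ • x₁ + a₂ • x₂) (hf_eq : f = c₁ • g₁ + c₂ • g₂)
    (hfy : f y = 1) : 0 ≤ c₁ := by
  -- Cramer's rule: `a₁ c₁ det (gᵢ xⱼ) = det [[f y, f x₂], [g₂ y, g₂ x₂]]`.
  have hcramer : a₁ * c₁ * (1 - g₁ x₂ * g₂ x₁) = 1 - g₂ y * f x₂ := by
    subst hy_eq hf_eq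
    simp only [map_add, map_smul, add_apply, smul_apply, smul_eq_mul, hg₁x₁, hg₂x₂] at hfy ⊢
    linear_combination hfy
  have hprod : g₂ y * f x₂ ≤ 1 := by
    calc g₂ y * f x₂ ≤ |g₂ y| * |f x₂| := by rw [← abs_mul]; exact le_abs_self _
      _ ≤ 1 := mul_le_one₀ (g₂.abs_apply_le_one hg₂ hy) (abs_nonneg _) (f.abs_apply_le_one hf hx₂)
  have : 0 ≤ a₁ * c₁ * (1 - g₁ x₂ * g₂ x₁) := by rw [hcramer]; linarith
  exact nonneg_of_mul_nonneg_right (nonneg_of_mul_nonneg_left this (by linarith)) ha₁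

end

theorem statement_7_general
    {Y : Type*} [NormedAddCommGroup Y] [NormedSpace ℝ Y]
    (hdim : Module.finrank ℝ Y = 2)
    (x₁ x₂ : Y) (hx₁ : ‖x₁‖ = 1) (hx₂ : ‖x₂‖ = 1)
    (x₁star x₂star : Y →L[ℝ] ℝ)
    (hx₁star : ‖x₁star‖ = 1) (hx₂star : ‖x₂star‖ = 1)
    (hsupp₁ : x₁star x₁ = 1) (hsupp₂ : x₂star x₂ = 1)
    (hsmooth₁ : ∀ g : Y →L[ℝ] ℝ, ‖g‖ = 1 → g x₁ = 1 → g = x₁star)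
    (hindstar : LinearIndependent ℝ ![x₁star, x₂star])
    (a₁ a₂ : ℝ) (ha₁ : 0 < a₁) (ha₂ : 0 < a₂)
    (y : Y) (hy : y = a₁ • x₁ + a₂ • x₂) (hynorm : ‖y‖ = 1)
    (f : Y →L[ℝ] ℝ) (hf : ‖f‖ = 1) (hfy : f y = 1) :
    ∃ c₁ c₂ : ℝ, 0 ≤ c₁ ∧ 0 ≤ c₂ ∧ f = c₁ • x₁star + c₂ • x₂star := by
  have : FiniteDimensional ℝ Y := .of_finrank_eq_succ hdim
  obtain ⟨c₁, c₂, hfc⟩ := exists_eq_smul_add_smul_of_finrank_eq_two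
    (ContinuousLinearMap.finrank_dual_eq.trans hdim) hindstar f
  have hcross : x₁star x₂ * x₂star x₁ < 1 := by
    have hα := x₁star.abs_apply_le_one hx₁star.le hx₂.le
    have hβ := abs_apply_lt_one_of_unique_support hsmooth₁ hindstar hx₂star hx₁.le
    calc x₁star x₂ * x₂star x₁ ≤ |x₁star x₂| * |x₂star x₁| := by
          rw [← abs_mul]; exact le_abs_self _
      _ < 1 := mul_lt_one_of_nonneg_of_lt_one_right hα (abs_nonneg _) hβ
  refine ⟨c₁, c₂, ?_, ?_, hfc⟩
  · exact coeff_nonneg_of_apply_eq_one hx₂star.le hf.le hx₂.le hynorm.le hsupp₁ hsupp₂ hcross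
      ha₁ hy hfc hfy
  · exact coeff_nonneg_of_apply_eq_one hx₁star.le hf.le hx₁.le hynorm.le hsupp₂ hsupp₁
      (by rwa [mul_comm]) ha₂ (hy.trans (add_comm _ _)) (hfc.trans (add_comm _ _)) hfy

theorem statement_7
    {Y : Type*} [NormedAddCommGroup Y] [NormedSpace ℝ Y]
    (hdim : Module.finrank ℝ Y = 2)
    (x₁ x₂ : Y) (hx₁ : ‖x₁‖ = 1) (hx₂ : ‖x₂‖ = 1)
    (hind : LinearIndependent ℝ ![x₁, x₂])
    (x₁star x₂star : Y →L[ℝ] ℝ)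
    (hx₁star : ‖x₁star‖ = 1) (hx₂star : ‖x₂star‖ = 1)
    (hsupp₁ : x₁star x₁ = 1) (hsupp₂ : x₂star x₂ = 1)
    (hsmooth₁ : ∀ g : Y →L[ℝ] ℝ, ‖g‖ = 1 → g x₁ = 1 → g = x₁star)
    (hsmooth₂ : ∀ g : Y →L[ℝ] ℝ, ‖g‖ = 1 → g x₂ = 1 → g = x₂star)
    (hindstar : LinearIndependent ℝ ![x₁star, x₂star])
    (a₁ a₂ : ℝ) (ha₁ : 0 < a₁) (ha₂ : 0 < a₂)
    (y : Y) (hy : y = a₁ • x₁ + a₂ • x₂) (hynorm : ‖y‖ = 1)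
    (f : Y →L[ℝ] ℝ) (hf : ‖f‖ = 1) (hfy : f y = 1) :
    ∃ c₁ c₂ : ℝ, 0 ≤ c₁ ∧ 0 ≤ c₂ ∧ f = c₁ • x₁star + c₂ • x₂star :=
  statement_7_general hdim x₁ x₂ hx₁ hx₂ x₁star x₂star hx₁star hx₂star hsupp₁ hsupp₂ hsmooth₁
    hindstar a₁ a₂ ha₁ ha₂ y hy hynorm f hf hfy
end

section
/- Let X be a Banach space, E a two-dimensional normed space that is not strictly convex, and Z a closed subspace of X of codimension two. If every bounded linear operator T : X → E with ker T = Z attains its norm, then every functional in Z^⊥ attains its norm on X. -/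
/-!
A normed space that is not strictly convex contains vectors `m`, `d ≠ 0` such that the segment
`m + [-1, 1] • d` lies in the unit sphere. A norming functional of `m` is then `1` at both ends of
the segment, hence vanishes on `d`, and so `|α| ≤ ‖α • m + β • d‖ ≤ max |α| |β|`.

Given `f ∈ Z^⊥` nonzero, the codimension assumption provides `g ∈ Z^⊥` with `ker f ∩ ker g = Z`,
rescaled so that `‖g‖ < ‖f‖`. The operator `T x = f x • m + g x • d` has kernel `Z` and norm `‖f‖`,
and at a unit vector `x` where `T` attains its norm, `‖f‖ = ‖T x‖ ≤ max |f x| |g x|` with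
`|g x| < ‖f‖` forces `|f x| = ‖f‖`.
-/

open Module

structure FlatPair {E : Type*} [NormedAddCommGroup E] [NormedSpace ℝ E] (m d : E) : Prop where
  ne_zero : d ≠ 0
  abs_le_norm : ∀ α β : ℝ, |α| ≤ ‖α • m + β • d‖
  norm_le_max : ∀ α β : ℝ, ‖α • m + β • d‖ ≤ max |α| |β|

theorem abs_add_add_abs_sub_eq_two_mul_max {K : Type*} [Field K] [LinearOrder K]
    [IsStrictOrderedRing K] (a b : K) : |a + b| + |a - b| = 2 * max |a| |b| := by
  rcases le_total |a| |b| with h | h <;> [rw [max_eq_right h]; rw [max_eq_left h]] <;>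
    cases abs_cases a <;> cases abs_cases b <;> cases abs_cases (a + b) <;>
    cases abs_cases (a - b) <;> linarith

theorem FlatPair.of_norm_midpoint_eq_one {E : Type*} [NormedAddCommGroup E] [NormedSpace ℝ E]
    {u v : E} (hu : ‖u‖ = 1) (hv : ‖v‖ = 1) (huv : u ≠ v)
    (hmid : ‖(2 : ℝ)⁻¹ • (u + v)‖ = 1) :
    FlatPair ((2 : ℝ)⁻¹ • (u + v)) ((2 : ℝ)⁻¹ • (u - v)) := by
  obtain ⟨φ, hφ, hφm⟩ :=
    exists_dual_vector ℝ ((2 : ℝ)⁻¹ • (u + v)) (by rw [hmid]; exact one_ne_zero)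
  have hφu_le : φ u ≤ 1 := by simpa [hφ, hu] using (le_abs_self _).trans (φ.le_opNorm u)
  have hφv_le : φ v ≤ 1 := by simpa [hφ, hv] using (le_abs_self _).trans (φ.le_opNorm v)
  have hφuv : φ u + φ v = 2 := by
    simp only [hmid, map_smul, map_add, smul_eq_mul] at hφm
    norm_num at hφm
    linarith
  have hφu : φ u = 1 := by linarith
  have hφv : φ v = 1 := by linarith
  refine ⟨fun h => huv ?_, fun α β => ?_, fun α β => ?_⟩
  · simpa [sub_eq_zero] using h
  · calc |α| = |φ (α • ((2 : ℝ)⁻¹ • (u + v)) + β • ((2 : ℝ)⁻¹ • (u - v)))| := by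
          simp only [map_add, map_smul, map_sub, hφu, hφv, smul_eq_mul]
          ring_nf
      _ ≤ ‖φ‖ * ‖_‖ := φ.le_opNorm _
      _ = _ := by rw [hφ, one_mul]
  · have : α • ((2 : ℝ)⁻¹ • (u + v)) + β • ((2 : ℝ)⁻¹ • (u - v))
        = ((α + β) / 2) • u + ((α - β) / 2) • v := by module
    calc _ = ‖((α + β) / 2) • u + ((α - β) / 2) • v‖ := by rw [this]
      _ ≤ |α + β| / 2 + |α - β| / 2 := by
          refine (norm_add_le _ _).trans_eq ?_
          simp [norm_smul, hu, hv]
      _ = max |α| |β| := by linarith [abs_add_add_abs_sub_eq_two_mul_max α β]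

namespace FlatPair

variable {X E : Type*} [NormedAddCommGroup X] [NormedSpace ℝ X]
  [NormedAddCommGroup E] [NormedSpace ℝ E] {m d : E} {f g : X →L[ℝ] ℝ}

theorem ker_smulRight_add (h : FlatPair m d) :
    LinearMap.ker ((f.smulRight m + g.smulRight d : X →L[ℝ] E) : X →ₗ[ℝ] E) =
      LinearMap.ker (f : X →ₗ[ℝ] ℝ) ⊓ LinearMap.ker (g : X →ₗ[ℝ] ℝ) := by
  ext x
  simp only [LinearMap.mem_ker, Submodule.mem_inf, ContinuousLinearMap.coe_coe, add_apply,
    ContinuousLinearMap.smulRight_apply]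
  refine ⟨fun hx => ?_, fun ⟨hf, hg⟩ => by simp [hf, hg]⟩
  have hf : f x = 0 := by simpa [hx] using h.abs_le_norm (f x) (g x)
  exact ⟨hf, by simpa [hf, h.ne_zero] using hx⟩

theorem norm_smulRight_add (h : FlatPair m d) (hgf : ‖g‖ ≤ ‖f‖) :
    ‖f.smulRight m + g.smulRight d‖ = ‖f‖ := by
  refine le_antisymm (ContinuousLinearMap.opNorm_le_bound _ (norm_nonneg f) fun x => ?_)
    (ContinuousLinearMap.opNorm_le_bound _ (norm_nonneg _) fun x => ?_)
  · calc ‖(f.smulRight m + g.smulRight d) x‖ ≤ max |f x| |g x| := by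
          simpa using h.norm_le_max _ _
      _ ≤ max (‖f‖ * ‖x‖) (‖g‖ * ‖x‖) := max_le_max (f.le_opNorm x) (g.le_opNorm x)
      _ = ‖f‖ * ‖x‖ := max_eq_left (by gcongr)
  · calc ‖f x‖ ≤ ‖(f.smulRight m + g.smulRight d) x‖ := by simpa using h.abs_le_norm _ _
      _ ≤ _ := ContinuousLinearMap.le_opNorm _ x

theorem abs_apply_eq_norm_of_norm_apply_eq (h : FlatPair m d) (hgf : ‖g‖ < ‖f‖) {x : X}
    (hx : ‖x‖ = 1)
    (hTx : ‖(f.smulRight m + g.smulRight d) x‖ = ‖f.smulRight m + g.smulRight d‖) :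
    |f x| = ‖f‖ := by
  have hfx : |f x| ≤ ‖f‖ := by simpa [hx] using f.le_opNorm x
  have hgx : |g x| < ‖f‖ := by
    have := g.le_opNorm x
    rw [hx, mul_one, Real.norm_eq_abs] at this
    linarith
  have hmax : ‖f‖ ≤ max |f x| |g x| := by
    rw [← h.norm_smulRight_add hgf.le, ← hTx]
    simpa using h.norm_le_max (f x) (g x)
  exact le_antisymm hfx ((le_max_iff.mp hmax).resolve_right hgx.not_ge)

end FlatPair

theorem Module.Dual.exists_ker_inf_ker_eq_bot {K V : Type*} [Field K] [AddCommGroup V] [Module K V]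
    (hV : finrank K V = 2) {f : Module.Dual K V} (hf : f ≠ 0) :
    ∃ g : Module.Dual K V, LinearMap.ker f ⊓ LinearMap.ker g = ⊥ := by
  have : FiniteDimensional K V := .of_finrank_eq_succ hV
  have hker : finrank K (LinearMap.ker f) = 1 := by
    have := f.finrank_range_add_finrank_ker
    rw [LinearMap.range_eq_top.mpr (f.surjective_of_ne_zero hf)] at this
    simp at this
    omega
  obtain ⟨w, hwf, hw⟩ := Submodule.exists_mem_ne_zero_of_ne_bot
    (Submodule.one_le_finrank_iff.mp hker.ge)
  obtain ⟨g, hgw⟩ : ∃ g : Module.Dual K V, g w ≠ 0 := by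
    simpa using (Module.forall_dual_apply_eq_zero_iff K w).not.mpr hw
  refine ⟨g, Submodule.finrank_eq_zero.mp ?_⟩
  have : LinearMap.ker f ⊓ LinearMap.ker g < LinearMap.ker f :=
    inf_lt_left.mpr fun hle => hgw (hle hwf)
  have := Submodule.finrank_lt_finrank_of_lt this
  omega

theorem exists_norm_lt_and_ker_inf_ker_eq {X : Type*} [NormedAddCommGroup X] [NormedSpace ℝ X]
    {Z : Submodule ℝ X} (hZ : IsClosed (Z : Set X)) (hcodim : finrank ℝ (X ⧸ Z) = 2)
    {f : X →L[ℝ] ℝ} (hfZ : Z ≤ LinearMap.ker (f : X →ₗ[ℝ] ℝ)) (hf : f ≠ 0) :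
    ∃ g : X →L[ℝ] ℝ, ‖g‖ < ‖f‖ ∧
      LinearMap.ker (f : X →ₗ[ℝ] ℝ) ⊓ LinearMap.ker (g : X →ₗ[ℝ] ℝ) = Z := by
  have : FiniteDimensional ℝ (X ⧸ Z) := .of_finrank_eq_succ hcodim
  set f' := Z.liftQ (f : X →ₗ[ℝ] ℝ) hfZ
  have hf' : f' ≠ 0 := fun h => hf <| ContinuousLinearMap.ext fun x => by
    simpa [f'] using LinearMap.congr_fun h (Submodule.Quotient.mk x)
  obtain ⟨g', hg'⟩ := Module.Dual.exists_ker_inf_ker_eq_bot hcodim hf'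
  set g : X →L[ℝ] ℝ := (LinearMap.toContinuousLinearMap g').comp Z.mkQL
  have hfpos : 0 < ‖f‖ := norm_pos_iff.mpr hf
  set c := ‖f‖ / (‖g‖ + 1)
  have hc : 0 < c := by positivity
  refine ⟨c • g, ?_, ?_⟩
  · calc ‖c • g‖ = ‖f‖ * (‖g‖ / (‖g‖ + 1)) := by
          rw [norm_smul, Real.norm_of_nonneg hc.le]; ring
      _ < ‖f‖ * 1 := by gcongr; rw [div_lt_one (by positivity)]; linarith
      _ = ‖f‖ := mul_one _
  · ext x
    simpa [f', g, hc.ne'] using SetLike.ext_iff.mp hg' (Submodule.Quotient.mk x)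

theorem statement_8_general
    {X E : Type*} [NormedAddCommGroup X] [NormedSpace ℝ X]
    [NormedAddCommGroup E] [NormedSpace ℝ E]
    (hnsc : ∃ u v : E, ‖u‖ = 1 ∧ ‖v‖ = 1 ∧ u ≠ v ∧ ‖(2 : ℝ)⁻¹ • (u + v)‖ = 1)
    (Z : Submodule ℝ X) (hZc : IsClosed (Z : Set X))
    (hcodim : Module.finrank ℝ (X ⧸ Z) = 2)
    (hall : ∀ T : X →L[ℝ] E, LinearMap.ker (T : X →ₗ[ℝ] E) = Z →
      ∃ x : X, ‖x‖ = 1 ∧ ‖T x‖ = ‖T‖) :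
    ∀ f : X →L[ℝ] ℝ, (∀ z ∈ Z, f z = 0) →
      ∃ x : X, ‖x‖ = 1 ∧ |f x| = ‖f‖ := by
  intro f hfZ
  rcases eq_or_ne f 0 with rfl | hf
  · have : Nontrivial (X ⧸ Z) := Module.nontrivial_of_finrank_pos (R := ℝ) (by omega)
    have : Nontrivial X := Z.mkQ_surjective.nontrivial
    obtain ⟨x, hx⟩ := exists_norm_eq X zero_le_one
    exact ⟨x, hx, by simp⟩
  obtain ⟨u, v, hu, hv, huv, hmid⟩ := hnsc
  have hmd := FlatPair.of_norm_midpoint_eq_one hu hv huv hmid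
  obtain ⟨g, hgf, hker⟩ :=
    exists_norm_lt_and_ker_inf_ker_eq hZc hcodim (fun z hz => hfZ z hz) hf
  obtain ⟨x, hx, hTx⟩ := hall _ (hmd.ker_smulRight_add.trans hker)
  exact ⟨x, hx, hmd.abs_apply_eq_norm_of_norm_apply_eq hgf hx hTx⟩

theorem statement_8
    {X E : Type*} [NormedAddCommGroup X] [NormedSpace ℝ X] [CompleteSpace X]
    [NormedAddCommGroup E] [NormedSpace ℝ E]
    (hdimE : Module.finrank ℝ E = 2)
    (hnsc : ∃ u v : E, ‖u‖ = 1 ∧ ‖v‖ = 1 ∧ u ≠ v ∧ ‖(2 : ℝ)⁻¹ • (u + v)‖ = 1)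
    (Z : Submodule ℝ X) (hZc : IsClosed (Z : Set X))
    (hcodim : Module.finrank ℝ (X ⧸ Z) = 2)
    (hall : ∀ T : X →L[ℝ] E, LinearMap.ker (T : X →ₗ[ℝ] E) = Z →
      ∃ x : X, ‖x‖ = 1 ∧ ‖T x‖ = ‖T‖) :
    ∀ f : X →L[ℝ] ℝ, (∀ z ∈ Z, f z = 0) →
      ∃ x : X, ‖x‖ = 1 ∧ |f x| = ‖f‖ :=
  statement_8_general hnsc Z hZc hcodim hall
end

section
/- Let X be a Banach space such that there is a norm-dense linear subspace of X* contained in the set of norm attaining functionals NA(X). Then for every Banach space Y, every finite rank operator T : X → Y can be approximated in operator norm by finite rank norm attaining operators. -/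
/-!
A finite-rank operator factors as `T = L ∘ G₀` with `G₀ : X → 𝕜ⁿ`, and the operators `G : X → 𝕜ⁿ`
with `φ ∘ G ∈ D` for every functional `φ` are dense, so it suffices that each such `L ∘ G` attains
its norm. The closure of the image of the unit ball under `G` is compact, so `‖L ∘ G‖ = ‖L a‖` for
some `a` in it. If `ψ` is a norming functional of `L a`, then `ψ ∘ L ∘ G ∈ D` has norm at least
`‖L a‖`, and a unit vector at which it attains its norm is one at which `L ∘ G` attains its norm.
-/

open Metric

section

variable {𝕜 : Type*} [RCLike 𝕜] {X F Z : Type*}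
  [NormedAddCommGroup X] [NormedSpace 𝕜 X] [NormedAddCommGroup F] [NormedSpace 𝕜 F]
  [NormedAddCommGroup Z] [NormedSpace 𝕜 Z]

namespace ContinuousLinearMap

def NormAttaining (T : X →L[𝕜] Z) : Prop :=
  ∃ x : X, ‖x‖ = 1 ∧ ‖T x‖ = ‖T‖

theorem norm_apply_le_opNorm_comp_of_mem_closure (A : F →L[𝕜] Z) (G : X →L[𝕜] F) {a : F}
    (ha : a ∈ closure (G '' closedBall 0 1)) : ‖A a‖ ≤ ‖A.comp G‖ := by
  refine closure_minimal ?_ (isClosed_le A.continuous.norm continuous_const) ha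
  rintro _ ⟨x, hx, rfl⟩
  exact (A.comp G).unit_le_opNorm x (mem_closedBall_zero_iff.1 hx)

theorem exists_mem_closure_image_closedBall_norm_eq_opNorm_comp [ProperSpace F]
    (L : F →L[𝕜] Z) (G : X →L[𝕜] F) :
    ∃ a ∈ closure (G '' closedBall 0 1), ‖L a‖ = ‖L.comp G‖ := by
  have hK : IsCompact (closure (G '' closedBall 0 1)) :=
    (G.lipschitz.isBounded_image isBounded_closedBall).isCompact_closure
  have hG0 : G 0 ∈ closure (G '' closedBall 0 1) := subset_closure ⟨0, by simp, rfl⟩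
  obtain ⟨a, ha, hmax⟩ := hK.exists_isMaxOn ⟨_, hG0⟩ L.continuous.norm.continuousOn
  refine ⟨a, ha, le_antisymm (L.norm_apply_le_opNorm_comp_of_mem_closure G ha) ?_⟩
  exact opNorm_le_of_unit_norm (norm_nonneg _) fun x hx =>
    hmax (subset_closure ⟨x, mem_closedBall_zero_iff.2 hx.le, rfl⟩)

theorem normAttaining_comp_of_forall_comp_mem [ProperSpace F] (L : F →L[𝕜] Z)
    {D : Set (X →L[𝕜] 𝕜)} (hD : ∀ f ∈ D, f.NormAttaining) {G : X →L[𝕜] F}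
    (hG : ∀ φ : F →L[𝕜] 𝕜, φ.comp G ∈ D) : (L.comp G).NormAttaining := by
  obtain ⟨a, ha, hLa⟩ := L.exists_mem_closure_image_closedBall_norm_eq_opNorm_comp G
  obtain ⟨ψ, hψ, hψa⟩ := exists_dual_vector'' 𝕜 (L a)
  obtain ⟨x, hx, hψx⟩ := hD _ (hG (ψ.comp L))
  refine ⟨x, hx, le_antisymm ((L.comp G).unit_le_opNorm x hx.le) ?_⟩
  calc ‖L.comp G‖ = ‖ψ (L a)‖ := by rw [← hLa, hψa, RCLike.norm_ofReal, abs_norm]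
    _ ≤ ‖(ψ.comp L).comp G‖ := (ψ.comp L).norm_apply_le_opNorm_comp_of_mem_closure G ha
    _ = ‖ψ (L (G x))‖ := hψx.symm
    _ ≤ ‖L (G x)‖ := by simpa using ψ.le_of_opNorm_le hψ (L (G x))

theorem exists_comp_eq_of_finiteDimensional_range (T : X →L[𝕜] Z)
    [FiniteDimensional 𝕜 (LinearMap.range (T : X →ₗ[𝕜] Z))] :
    ∃ (n : ℕ) (L : (Fin n → 𝕜) →L[𝕜] Z) (G : X →L[𝕜] (Fin n → 𝕜)), L.comp G = T := by
  let E := LinearMap.range (T : X →ₗ[𝕜] Z)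
  let b := Module.finBasis 𝕜 E
  refine ⟨_, E.subtypeL.comp b.equivFunL.symm.toContinuousLinearMap,
    b.equivFunL.toContinuousLinearMap.comp (T.codRestrict E fun x => LinearMap.mem_range_self _ x),
    ?_⟩
  ext x
  simp

theorem comp_pi_eq_sum {ι : Type*} [Fintype ι] [DecidableEq ι] (φ : (ι → 𝕜) →L[𝕜] 𝕜)
    (g : ι → X →L[𝕜] 𝕜) : φ.comp (pi g) = ∑ i, φ (Pi.single i 1) • g i := by
  ext x
  have hx : pi g x = ∑ i, g i x • Pi.single i 1 := by ext j; simp [Pi.single_apply]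
  simp [hx, mul_comm]

end ContinuousLinearMap

open ContinuousLinearMap

theorem dense_setOf_forall_comp_mem {ι : Type*} [Fintype ι] {D : Submodule 𝕜 (X →L[𝕜] 𝕜)}
    (hD : Dense (D : Set (X →L[𝕜] 𝕜))) :
    Dense {G : X →L[𝕜] (ι → 𝕜) | ∀ φ : (ι → 𝕜) →L[𝕜] 𝕜, φ.comp G ∈ D} := by
  classical
  let e := piEquivL 𝕜 X fun _ : ι => 𝕜
  have hpi : Dense (Set.univ.pi fun _ : ι => (D : Set (X →L[𝕜] 𝕜))) :=
    dense_pi Set.univ fun _ _ => hD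
  refine (e.surjective.denseRange.dense_image e.continuous hpi).mono ?_
  rintro _ ⟨g, hg, rfl⟩ φ
  change φ.comp (pi g) ∈ D
  rw [comp_pi_eq_sum]
  exact D.sum_mem fun i _ => D.smul_mem _ (hg i trivial)

theorem mem_closure_setOf_finiteDimensional_range_normAttaining
    {D : Submodule 𝕜 (X →L[𝕜] 𝕜)} (hD : Dense (D : Set (X →L[𝕜] 𝕜)))
    (hNA : ∀ f ∈ D, f.NormAttaining) (T : X →L[𝕜] Z)
    [FiniteDimensional 𝕜 (LinearMap.range (T : X →ₗ[𝕜] Z))] :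
    T ∈ closure {S : X →L[𝕜] Z |
      FiniteDimensional 𝕜 (LinearMap.range (S : X →ₗ[𝕜] Z)) ∧ S.NormAttaining} := by
  obtain ⟨n, L, G₀, rfl⟩ := T.exists_comp_eq_of_finiteDimensional_range
  refine map_mem_closure (continuous_const.clm_comp continuous_id)
    (dense_setOf_forall_comp_mem hD G₀) fun G hG =>
      ⟨?_, L.normAttaining_comp_of_forall_comp_mem hNA hG⟩
  rw [toLinearMap_comp]
  exact Submodule.finiteDimensional_of_le (LinearMap.range_comp_le_range _ _)

end

theorem statement_10_general
    {X : Type u} [NormedAddCommGroup X] [NormedSpace ℝ X]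
    (hX : ∃ D : Submodule ℝ (X →L[ℝ] ℝ), Dense (D : Set (X →L[ℝ] ℝ)) ∧
      ∀ f ∈ D, ∃ x : X, ‖x‖ = 1 ∧ |f x| = ‖f‖) :
    ∀ (Y : Type v) [NormedAddCommGroup Y] [NormedSpace ℝ Y] [CompleteSpace Y],
      ∀ T : X →L[ℝ] Y, FiniteDimensional ℝ ↥(LinearMap.range (T : X →ₗ[ℝ] Y)) →
        ∀ ε : ℝ, 0 < ε →
          ∃ S : X →L[ℝ] Y, FiniteDimensional ℝ ↥(LinearMap.range (S : X →ₗ[ℝ] Y)) ∧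
            (∃ x : X, ‖x‖ = 1 ∧ ‖S x‖ = ‖S‖) ∧ ‖T - S‖ < ε := by
  obtain ⟨D, hD, hNA⟩ := hX
  intro Y _ _ _ T _ ε hε
  obtain ⟨S, ⟨hS, hSnorm⟩, hTS⟩ :=
    mem_closure_iff.1 (mem_closure_setOf_finiteDimensional_range_normAttaining hD hNA T) ε hε
  exact ⟨S, hS, hSnorm, by rwa [← dist_eq_norm]⟩

theorem statement_10
    {X : Type u} [NormedAddCommGroup X] [NormedSpace ℝ X] [CompleteSpace X]
    (hX : ∃ D : Submodule ℝ (X →L[ℝ] ℝ), Dense (D : Set (X →L[ℝ] ℝ)) ∧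
      ∀ f ∈ D, ∃ x : X, ‖x‖ = 1 ∧ |f x| = ‖f‖) :
    ∀ (Y : Type v) [NormedAddCommGroup Y] [NormedSpace ℝ Y] [CompleteSpace Y],
      ∀ T : X →L[ℝ] Y, FiniteDimensional ℝ ↥(LinearMap.range (T : X →ₗ[ℝ] Y)) →
        ∀ ε : ℝ, 0 < ε →
          ∃ S : X →L[ℝ] Y, FiniteDimensional ℝ ↥(LinearMap.range (S : X →ₗ[ℝ] Y)) ∧
            (∃ x : X, ‖x‖ = 1 ∧ ‖S x‖ = ‖S‖) ∧ ‖T - S‖ < ε :=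
  statement_10_general hX
end

section
/- For a positive measure μ, the set of simple (finitely-valued) functions in L∞(μ) is a dense linear subspace of L∞(μ) = L₁(μ)*, and every simple function, viewed as a functional on L₁(μ), attains its norm on the unit ball of L₁(μ). -/
/-!
A real function bounded by `C` is uniformly within `δ` of its rounding `δ⌊f/δ⌋` to the grid `δℤ`,
which takes finitely many values; hence simple functions are dense in `L∞`. A simple function `s`
takes finitely many values, so `‖s‖∞ = |v|` for a value `v` whose fibre has positive measure.
Normalising the indicator of a finite-measure piece of that fibre (σ-finiteness) and multiplying
by the sign of `v` gives a unit vector of `L¹` on which `s` integrates to `‖s‖∞`.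
-/

open MeasureTheory
open scoped ENNReal

namespace MeasureTheory

variable {α : Type*} [MeasurableSpace α] {μ : Measure α}

namespace SimpleFunc

theorem ae_measure_preimage_singleton_ne_zero {β : Type*} (s : SimpleFunc α β) :
    ∀ᵐ x ∂μ, μ (s ⁻¹' {s x}) ≠ 0 := by
  rw [ae_iff]
  simp only [ne_eq, not_not]
  have hsub : {x | μ (s ⁻¹' {s x}) = 0} ⊆
      ⋃ y ∈ {y ∈ Set.range s | μ (s ⁻¹' {y}) = 0}, s ⁻¹' {y} :=
    fun x hx => Set.mem_biUnion ⟨Set.mem_range_self x, hx⟩ rfl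
  refine measure_mono_null hsub ((measure_biUnion_null_iff ?_).2 fun y hy => hy.2)
  exact (s.finite_range.subset (Set.sep_subset _ _)).countable

theorem exists_eLpNormEssSup_eq {E : Type*} [NormedAddCommGroup E] (hμ : μ ≠ 0)
    (s : SimpleFunc α E) :
    ∃ x, μ (s ⁻¹' {s x}) ≠ 0 ∧ eLpNormEssSup s μ = ‖s x‖ₑ := by
  classical
  have hfibre := s.ae_measure_preimage_singleton_ne_zero (μ := μ)
  set T := s.range.filter fun y => μ (s ⁻¹' {y}) ≠ 0
  have mem_T (x : α) (hx : μ (s ⁻¹' {s x}) ≠ 0) : s x ∈ T :=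
    Finset.mem_filter.2 ⟨s.mem_range_self x, hx⟩
  have hT : T.Nonempty := by
    have := ae_neBot.2 hμ
    obtain ⟨x, hx⟩ := hfibre.exists
    exact ⟨s x, mem_T x hx⟩
  obtain ⟨y, hyT, hmax⟩ := T.exists_max_image (‖·‖ₑ) hT
  obtain ⟨hy_range, hy_pos⟩ := Finset.mem_filter.1 hyT
  obtain ⟨x₀, rfl⟩ := s.mem_range.1 hy_range
  refine ⟨x₀, hy_pos, le_antisymm ?_ ?_⟩
  · refine eLpNormEssSup_le_of_ae_enorm_bound ?_
    filter_upwards [hfibre] with x hx using hmax _ (mem_T x hx)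
  · by_contra! hlt
    refine hy_pos (measure_mono_null (fun x hx => ?_) (ae_iff.1 (ae_lt_of_essSup_lt hlt)))
    rw [Set.mem_ofPred_eq, Set.mem_preimage.1 hx]
    exact lt_irrefl _

theorem exists_forall_abs_sub_le {f : α → ℝ} (hf : Measurable f) {C : ℝ} (hC : ∀ x, |f x| ≤ C)
    {δ : ℝ} (hδ : 0 < δ) : ∃ s : SimpleFunc α ℝ, ∀ x, |f x - s x| ≤ δ := by
  set s : α → ℝ := fun x => δ * ⌊f x / δ⌋
  have hs : Measurable s := measurable_const.mul (measurable_from_top.comp (hf.div_const δ).floor)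
  have hrange : (Set.range s).Finite := by
    refine ((Set.finite_Icc ⌊-C / δ⌋ ⌊C / δ⌋).image fun n : ℤ => δ * n).subset ?_
    rintro _ ⟨x, rfl⟩
    obtain ⟨hlo, hhi⟩ := abs_le.1 (hC x)
    exact ⟨_, ⟨Int.floor_le_floor (by gcongr), Int.floor_le_floor (by gcongr)⟩, rfl⟩
  refine ⟨⟨s, fun c => hs (measurableSet_singleton c), hrange⟩, fun x => ?_⟩
  have hfract : f x - s x = δ * Int.fract (f x / δ) := by
    rw [Int.fract, mul_sub, mul_div_cancel₀ _ hδ.ne']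
  rw [SimpleFunc.coe_mk, hfract, abs_of_nonneg (by positivity)]
  exact mul_le_of_le_one_right hδ.le (Int.fract_lt_one _).le

end SimpleFunc

namespace Lp

variable {E : Type*} [NormedAddCommGroup E]

theorem mem_simpleFunc_iff {p : ℝ≥0∞} {f : Lp E p μ} :
    f ∈ Lp.simpleFunc E p μ ↔ ∃ s : SimpleFunc α E, f =ᵐ[μ] s := by
  refine ⟨fun ⟨s, hs⟩ => ⟨s, ?_⟩, fun ⟨s, hs⟩ => ⟨s, ?_⟩⟩
  · rw [← hs]; exact AEEqFun.coeFn_mk _ _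
  · exact AEEqFun.ext ((AEEqFun.coeFn_mk _ _).trans hs.symm)

attribute [local instance] Lp.simpleFunc.smul in
variable (E) in
def simpleFuncSubmodule (𝕜 : Type*) [NormedRing 𝕜] [Module 𝕜 E] [IsBoundedSMul 𝕜 E]
    (p : ℝ≥0∞) (μ : Measure α) : Submodule 𝕜 (Lp E p μ) :=
  { Lp.simpleFunc E p μ with
    smul_mem' := fun c f hf => (c • (⟨f, hf⟩ : Lp.simpleFunc E p μ)).2 }

theorem norm_top_eq_toReal_eLpNormEssSup (f : Lp E ∞ μ) :
    ‖f‖ = (eLpNormEssSup f μ).toReal := by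
  rw [Lp.norm_def, eLpNorm_exponent_top]

theorem ae_norm_le_norm_top (f : Lp E ∞ μ) : ∀ᵐ x ∂μ, ‖f x‖ ≤ ‖f‖ := by
  have hfin : eLpNormEssSup f μ ≠ ∞ := by
    rw [← eLpNorm_exponent_top]; exact Lp.eLpNorm_ne_top f
  filter_upwards [enorm_ae_le_eLpNormEssSup f μ] with x hx
  rw [norm_top_eq_toReal_eLpNormEssSup, ← toReal_enorm]
  exact ENNReal.toReal_mono hfin hx

theorem norm_top_le_of_ae_bound {f : Lp E ∞ μ} {C : ℝ} (hC : 0 ≤ C)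
    (hfC : ∀ᵐ x ∂μ, ‖f x‖ ≤ C) : ‖f‖ ≤ C := by
  rw [norm_top_eq_toReal_eLpNormEssSup]
  exact ENNReal.toReal_le_of_le_ofReal hC (eLpNormEssSup_le_of_ae_bound hfC)

theorem exists_simpleFunc_ae_abs_sub_le (g : Lp ℝ ∞ μ) {δ : ℝ} (hδ : 0 < δ) :
    ∃ s : SimpleFunc α ℝ, ∀ᵐ x ∂μ, |g x - s x| ≤ δ := by
  obtain ⟨h, hh, hgh⟩ := Lp.aestronglyMeasurable g
  set h' : α → ℝ := fun x => max (-‖g‖) (min ‖g‖ (h x))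
  have hh' : Measurable h' := measurable_const.max (measurable_const.min hh.measurable)
  have hh'C (x : α) : |h' x| ≤ ‖g‖ :=
    abs_le.2 ⟨le_max_left _ _, max_le (by linarith [norm_nonneg g]) (min_le_left _ _)⟩
  have hgh' : g =ᵐ[μ] h' := by
    filter_upwards [hgh, ae_norm_le_norm_top g] with x hx hxC
    obtain ⟨hlo, hhi⟩ := abs_le.1 hxC
    simp only [h', ← hx, min_eq_right hhi, max_eq_right hlo]
  obtain ⟨s, hs⟩ := SimpleFunc.exists_forall_abs_sub_le hh' hh'C hδ
  exact ⟨s, by filter_upwards [hgh'] with x hx using hx ▸ hs x⟩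

theorem dense_simpleFunc_top : Dense (Lp.simpleFunc ℝ ∞ μ : Set (Lp ℝ ∞ μ)) := by
  refine fun g => Metric.mem_closure_iff.2 fun ε hε => ?_
  obtain ⟨s, hs⟩ := exists_simpleFunc_ae_abs_sub_le g (half_pos hε)
  have hsLp := s.memLp_top μ
  refine ⟨hsLp.toLp s, ⟨s, rfl⟩, ?_⟩
  rw [dist_eq_norm_sub]
  refine (norm_top_le_of_ae_bound (half_pos hε).le ?_).trans_lt (half_lt_self hε)
  filter_upwards [Lp.coeFn_sub g (hsLp.toLp s), hsLp.coeFn_toLp, hs] with x h1 h2 h3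
  rwa [h1, Pi.sub_apply, h2, Real.norm_eq_abs]

end Lp

theorem exists_norm_eq_one_integral_mul_eq_abs [SigmaFinite μ] {A : Set α} (hA : MeasurableSet A)
    (hA0 : μ A ≠ 0) {g : α → ℝ} {v : ℝ} (hgA : ∀ᵐ x ∂μ.restrict A, g x = v) :
    ∃ f : Lp ℝ 1 μ, ‖f‖ = 1 ∧ ∫ x, f x * g x ∂μ = |v| := by
  obtain ⟨B, hB, hBA, hB0, hBtop⟩ :=
    Measure.exists_subset_measure_lt_top hA (pos_iff_ne_zero.2 hA0)
  have hμB : 0 < μ.real B := ENNReal.toReal_pos hB0.ne' hBtop.ne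
  obtain ⟨c, hc, hcv⟩ : ∃ c : ℝ, |c| = 1 ∧ c * v = |v| := by
    rcases abs_choice v with h | h
    · exact ⟨1, abs_one, by rw [h, one_mul]⟩
    · exact ⟨-1, by rw [abs_neg, abs_one], by rw [h, neg_one_mul]⟩
  refine ⟨indicatorConstLp 1 hB hBtop.ne (c / μ.real B), ?_, ?_⟩
  · rw [norm_indicatorConstLp one_ne_zero ENNReal.one_ne_top, Real.norm_eq_abs, abs_div, hc,
      abs_of_pos hμB]
    simp [hμB.ne']
  have hgB : ∀ᵐ x ∂μ.restrict B, g x = v := ae_restrict_of_ae_restrict_of_subset hBA hgA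
  calc ∫ x, indicatorConstLp 1 hB hBtop.ne (c / μ.real B) x * g x ∂μ
      = ∫ x, B.indicator (fun x => c / μ.real B * g x) x ∂μ := by
        refine integral_congr_ae ?_
        filter_upwards [indicatorConstLp_coeFn (p := 1) (hs := hB) (hμs := hBtop.ne)
          (c := c / μ.real B)] with x hx
        rw [hx, Set.indicator_mul_left]
    _ = ∫ x in B, c / μ.real B * v ∂μ := by
        rw [integral_indicator hB]
        exact integral_congr_ae (by filter_upwards [hgB] with x hx using by rw [hx])
    _ = |v| := by
        rw [setIntegral_const, smul_eq_mul, ← hcv]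
        field_simp

end MeasureTheory

theorem statement_11
    {α : Type*} [MeasurableSpace α] (μ : Measure α) [SigmaFinite μ] (hμ : μ ≠ 0) :
    ∃ D : Submodule ℝ (Lp ℝ ⊤ μ),
      (D : Set (Lp ℝ ⊤ μ)) = {g : Lp ℝ ⊤ μ | ∃ s : SimpleFunc α ℝ, ⇑g =ᵐ[μ] ⇑s} ∧
      Dense (D : Set (Lp ℝ ⊤ μ)) ∧
      ∀ g ∈ D, ∃ f : Lp ℝ 1 μ, ‖f‖ = 1 ∧ |∫ x, f x * g x ∂μ| = ‖g‖ := by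
  refine ⟨Lp.simpleFuncSubmodule ℝ ℝ ∞ μ, Set.ext fun g => Lp.mem_simpleFunc_iff,
    Lp.dense_simpleFunc_top, fun g hg => ?_⟩
  obtain ⟨s, hgs⟩ := Lp.mem_simpleFunc_iff.1 hg
  obtain ⟨x₀, hx₀, hsup⟩ := s.exists_eLpNormEssSup_eq hμ
  have hnorm : ‖g‖ = |s x₀| := by
    rw [Lp.norm_top_eq_toReal_eLpNormEssSup, eLpNormEssSup_congr_ae hgs, hsup, toReal_enorm,
      Real.norm_eq_abs]
  have hfibre := s.measurableSet_preimage {s x₀}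
  have hg_fibre : ∀ᵐ x ∂μ.restrict (s ⁻¹' {s x₀}), g x = s x₀ := by
    filter_upwards [ae_restrict_of_ae hgs, ae_restrict_mem hfibre] with x hx hx₀
    rw [hx, hx₀]
  obtain ⟨f, hf, hfg⟩ := exists_norm_eq_one_integral_mul_eq_abs hfibre hx₀ hg_fibre
  exact ⟨f, hf, by rw [hfg, hnorm, abs_abs]⟩
end

section
/- Let X, Y be Banach spaces and T : X → Y a bounded linear operator such that every functional in (ker T)^⊥ attains its norm on X. Then T can be approximated in operator norm by norm attaining operators whose kernels contain ker T. -/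
/-!
Lindenstrauss's iteration approximates `T` by operators `S` with `ker T ≤ ker S` whose adjoint
attains its norm: `‖y ∘ S‖ = ‖S‖` for some `y` in the unit ball of `Y*`. Starting from
`S 0 = T`, each step sets `S (j + 1) = (1 + c_j • y_j ⊗ w_j) ∘ S j`, where
`S j (u j) = ‖S j (u j)‖ • w j` is an almost maximal value of `S j` and `y_j` norms it; such a
step can only enlarge the kernel. With `c_j = c₀ ^ 2 ^ j` the later steps are too small to undo
the gain of step `j`, which forces every later `y_m`, hence any weak-* cluster point `y`, to
almost norm `w j`, and so `y` norms the limit `S`. Then `y ∘ S` vanishes on `ker T`, so by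
hypothesis it attains its norm at a unit vector `x`, and `‖S‖ = |y (S x)| ≤ ‖S x‖`.
-/

open Filter Topology

theorem exists_norm_le_one_forall_le_norm_apply {𝕜 E ι : Type*} [NontriviallyNormedField 𝕜]
    [ProperSpace 𝕜] [NormedAddCommGroup E] [NormedSpace 𝕜 E] {l : Filter ι} [l.NeBot]
    (y : ι → StrongDual 𝕜 E) (hy : ∀ i, ‖y i‖ ≤ 1) :
    ∃ y' : StrongDual 𝕜 E, ‖y'‖ ≤ 1 ∧ ∀ v r, (∀ᶠ i in l, r ≤ ‖y i v‖) → r ≤ ‖y' v‖ := by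
  obtain ⟨y', hy'_mem, hy'_cluster⟩ :=
    (WeakDual.isCompact_closedBall (𝕜 := 𝕜) (E := E) 0 1).exists_mapClusterPt
      (f := l) (u := fun i => StrongDual.toWeakDual (y i))
      (le_principal_iff.mpr (mem_map.mpr (Eventually.of_forall fun i => by simpa using hy i)))
  refine ⟨WeakDual.toStrongDual y', by simpa using hy'_mem, fun v r hr => ?_⟩
  have hclosed : IsClosed {z : WeakDual 𝕜 E | r ≤ ‖z v‖} :=
    isClosed_le continuous_const (WeakBilin.eval_continuous _ v).norm
  exact hclosed.mem_of_mapClusterPt hy'_cluster hr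

theorem norm_sub_le_of_norm_succ_sub_le {E : Type*} [SeminormedAddCommGroup E] {s : ℕ → E}
    {c : ℕ → ℝ} (hc : ∀ k, 0 ≤ c k) (hc_succ : ∀ k, 2 * c (k + 1) ≤ c k)
    (hs : ∀ k, ‖s (k + 1) - s k‖ ≤ c k * ‖s k‖) {n m : ℕ} (hn : c n ≤ 1 / 4) (hnm : n ≤ m) :
    ‖s m - s n‖ ≤ 4 * c n * ‖s n‖ := by
  suffices h : ∀ i, ‖s (n + i) - s n‖ ≤ 4 * (c n - c (n + i)) * ‖s n‖ by
    obtain ⟨i, rfl⟩ := Nat.exists_eq_add_of_le hnm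
    nlinarith [h i, hc (n + i), norm_nonneg (s n)]
  intro i
  induction i with
  | zero => simp
  | succ i ih =>
    have hsi : ‖s (n + i)‖ ≤ 2 * ‖s n‖ := by
      nlinarith [norm_le_norm_add_norm_sub' (s (n + i)) (s n), hc (n + i), norm_nonneg (s n)]
    calc ‖s (n + i + 1) - s n‖
        ≤ ‖s (n + i + 1) - s (n + i)‖ + ‖s (n + i) - s n‖ :=
          norm_sub_le_norm_sub_add_norm_sub _ _ _
      _ ≤ c (n + i) * (2 * ‖s n‖) + 4 * (c n - c (n + i)) * ‖s n‖ :=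
          add_le_add ((hs _).trans (mul_le_mul_of_nonneg_left hsi (hc _))) ih
      _ ≤ 4 * (c n - c (n + i + 1)) * ‖s n‖ := by
          nlinarith [hc_succ (n + i), norm_nonneg (s n)]

theorem exists_tendsto_of_norm_succ_sub_le {E : Type*} [SeminormedAddCommGroup E]
    [CompleteSpace E] {s : ℕ → E} {c : ℕ → ℝ} (hc : ∀ k, 0 ≤ c k)
    (hc_succ : ∀ k, 2 * c (k + 1) ≤ c k) (hc_le : ∀ k, c k ≤ 1 / 4) (hc_lim : Tendsto c atTop (𝓝 0))
    (hs : ∀ k, ‖s (k + 1) - s k‖ ≤ c k * ‖s k‖) :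
    ∃ L, Tendsto s atTop (𝓝 L) ∧ ∀ n, ‖L - s n‖ ≤ 4 * c n * ‖s n‖ := by
  have htail := fun {n m : ℕ} => norm_sub_le_of_norm_succ_sub_le hc hc_succ hs (hc_le n) (m := m)
  have hbound : ∀ n, ‖s n‖ ≤ 2 * ‖s 0‖ := fun n => by
    nlinarith [norm_le_norm_add_norm_sub' (s n) (s 0), htail n.zero_le, hc_le 0,
      norm_nonneg (s 0)]
  have hcauchy : CauchySeq s := by
    refine cauchySeq_of_le_tendsto_0' (fun n => 8 * c n * ‖s 0‖) (fun n m hnm => ?_) ?_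
    · rw [dist_comm, dist_eq_norm]
      nlinarith [htail hnm, hbound n, hc n]
    · simpa using (hc_lim.const_mul 8).mul_const ‖s 0‖
  obtain ⟨L, hL⟩ := cauchySeq_tendsto_of_complete hcauchy
  refine ⟨L, hL, fun n => le_of_tendsto ((hL.sub_const (s n)).norm) ?_⟩
  filter_upwards [eventually_ge_atTop n] with m hm using htail hm

theorem ker_le_of_tendsto {𝕜 E F : Type*} [NontriviallyNormedField 𝕜] [NormedAddCommGroup E]
    [NormedSpace 𝕜 E] [NormedAddCommGroup F] [NormedSpace 𝕜 F] {K : Submodule 𝕜 E}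
    {S : ℕ → E →L[𝕜] F} {L : E →L[𝕜] F} (hS : ∀ j, K ≤ LinearMap.ker (S j : E →ₗ[𝕜] F))
    (hL : Tendsto S atTop (𝓝 L)) : K ≤ LinearMap.ker (L : E →ₗ[𝕜] F) := by
  intro z hz
  have hSz : (fun j => S j z) = fun _ => 0 := funext fun j => hS j hz
  have hlim : Tendsto (fun j => S j z) atTop (𝓝 (L z)) :=
    ((ContinuousLinearMap.apply 𝕜 F z).continuous.tendsto L).comp hL
  rw [hSz] at hlim
  exact tendsto_nhds_unique hlim tendsto_const_nhds

section Schedule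

variable {c₀ : ℝ}

theorem pow_two_pow_succ (c₀ : ℝ) (j : ℕ) : c₀ ^ 2 ^ (j + 1) = (c₀ ^ 2 ^ j) ^ 2 := by
  rw [pow_succ, pow_mul]

theorem pow_two_pow_le_pow_two_pow (h₀ : 0 ≤ c₀) (h₁ : c₀ ≤ 1) {i j : ℕ} (hij : i ≤ j) :
    c₀ ^ 2 ^ j ≤ c₀ ^ 2 ^ i :=
  pow_le_pow_of_le_one h₀ h₁ (Nat.pow_le_pow_right two_pos hij)

theorem pow_two_pow_le (h₀ : 0 ≤ c₀) (h₁ : c₀ ≤ 1) (j : ℕ) : c₀ ^ 2 ^ j ≤ c₀ := by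
  simpa using pow_two_pow_le_pow_two_pow h₀ h₁ (Nat.zero_le j)

theorem tendsto_pow_two_pow_atTop (h₀ : 0 ≤ c₀) (h₁ : c₀ < 1) :
    Tendsto (fun j : ℕ => c₀ ^ 2 ^ j) atTop (𝓝 0) :=
  (tendsto_pow_atTop_nhds_zero_of_lt_one h₀ h₁).comp
    (tendsto_pow_atTop_atTop_of_one_lt one_lt_two)

end Schedule

section Lindenstrauss

variable {X Y : Type*} [NormedAddCommGroup X] [NormedSpace ℝ X] [NormedAddCommGroup Y]
  [NormedSpace ℝ Y]

theorem exists_norm_le_one_eq_norm_smul (v : Y) : ∃ w : Y, ‖w‖ ≤ 1 ∧ v = ‖v‖ • w := by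
  rcases eq_or_ne v 0 with rfl | hv
  · exact ⟨0, by simp, by simp⟩
  · exact ⟨‖v‖⁻¹ • v, (norm_smul_inv_norm hv).le,
      (smul_inv_smul₀ (norm_ne_zero_iff.mpr hv) v).symm⟩

theorem ContinuousLinearMap.exists_norm_le_one_le_norm_apply (S : X →L[ℝ] Y) {η : ℝ}
    (hη : 0 < η) : ∃ u : X, ‖u‖ ≤ 1 ∧ (1 - η) * ‖S‖ ≤ ‖S u‖ := by
  rcases (norm_nonneg S).eq_or_lt with hS | hS
  · exact ⟨0, by simp, by simp [← hS]⟩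
  · obtain ⟨u, hu, hSu⟩ :=
      S.exists_lt_apply_of_lt_opNorm (r := (1 - η) * ‖S‖) (by nlinarith)
    exact ⟨u, hu.le, hSu.le⟩

structure IsLindenstraussSeq (c₀ : ℝ) (S : ℕ → X →L[ℝ] Y) (u : ℕ → X) (w : ℕ → Y)
    (y : ℕ → StrongDual ℝ Y) : Prop where
  norm_u_le (j : ℕ) : ‖u j‖ ≤ 1
  norm_w_le (j : ℕ) : ‖w j‖ ≤ 1
  norm_y_le (j : ℕ) : ‖y j‖ ≤ 1
  apply_u (j : ℕ) : S j (u j) = ‖S j (u j)‖ • w j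
  y_apply_u (j : ℕ) : y j (S j (u j)) = ‖S j (u j)‖
  /-- The slack `c₀ ^ 2 ^ (j + 1) = c_j ^ 2` is negligible against the step size `c_j`. -/
  le_norm_apply_u (j : ℕ) : (1 - c₀ ^ 2 ^ (j + 1)) * ‖S j‖ ≤ ‖S j (u j)‖
  succ (j : ℕ) :
    S (j + 1) = (ContinuousLinearMap.id ℝ Y + c₀ ^ 2 ^ j • (y j).smulRight (w j)).comp (S j)

theorem exists_isLindenstraussSeq (T : X →L[ℝ] Y) {c₀ : ℝ} (hc₀ : 0 < c₀) :
    ∃ S u w y, S 0 = T ∧ IsLindenstraussSeq c₀ S u w y := by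
  choose u hu using fun (S : X →L[ℝ] Y) (j : ℕ) =>
    S.exists_norm_le_one_le_norm_apply (pow_pos hc₀ (2 ^ (j + 1)))
  choose w hw using exists_norm_le_one_eq_norm_smul (Y := Y)
  choose y hy using exists_dual_vector'' ℝ (E := Y)
  let S : ℕ → X →L[ℝ] Y := fun j => Nat.rec T (fun j Sj =>
    (ContinuousLinearMap.id ℝ Y +
      c₀ ^ 2 ^ j • (y (Sj (u Sj j))).smulRight (w (Sj (u Sj j)))).comp Sj) j
  refine ⟨S, fun j => u (S j) j, fun j => w (S j (u (S j) j)), fun j => y (S j (u (S j) j)),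
    rfl, ?_⟩
  exact
    { norm_u_le := fun j => (hu _ j).1
      norm_w_le := fun j => (hw _).1
      norm_y_le := fun j => (hy _).1
      apply_u := fun j => (hw _).2
      y_apply_u := fun j => (hy _).2
      le_norm_apply_u := fun j => (hu _ j).2
      succ := fun j => rfl }

namespace IsLindenstraussSeq

variable {c₀ : ℝ} {S : ℕ → X →L[ℝ] Y} {u : ℕ → X} {w : ℕ → Y} {y : ℕ → StrongDual ℝ Y}

theorem succ_apply (h : IsLindenstraussSeq c₀ S u w y) (j : ℕ) (x : X) :
    S (j + 1) x = S j x + (c₀ ^ 2 ^ j * y j (S j x)) • w j := by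
  simp [h.succ j, mul_smul]

theorem succ_apply_u (h : IsLindenstraussSeq c₀ S u w y) (j : ℕ) :
    S (j + 1) (u j) = (1 + c₀ ^ 2 ^ j) • S j (u j) := by
  conv_rhs => rw [add_smul, one_smul, h.apply_u j]
  rw [h.succ_apply, h.y_apply_u, mul_smul, ← h.apply_u]

theorem ker_le (h : IsLindenstraussSeq c₀ S u w y) (j : ℕ) :
    LinearMap.ker (S 0 : X →ₗ[ℝ] Y) ≤ LinearMap.ker (S j : X →ₗ[ℝ] Y) := by
  induction j with
  | zero => exact le_rfl
  | succ j ih =>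
    intro z hz
    have hz' : S j z = 0 := ih hz
    simp [h.succ_apply, hz']

theorem norm_succ_sub_le (h : IsLindenstraussSeq c₀ S u w y) (hc₀ : 0 < c₀) (j : ℕ) :
    ‖S (j + 1) - S j‖ ≤ c₀ ^ 2 ^ j * ‖S j‖ := by
  have hdiff : S (j + 1) - S j = c₀ ^ 2 ^ j • ((y j).smulRight (w j)).comp (S j) := by
    rw [h.succ j, ContinuousLinearMap.add_comp, ContinuousLinearMap.id_comp,
      ContinuousLinearMap.smul_comp, add_sub_cancel_left]
  have hrank : ‖(y j).smulRight (w j)‖ ≤ 1 := by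
    rw [ContinuousLinearMap.norm_smulRight_apply]
    exact mul_le_one₀ (h.norm_y_le j) (norm_nonneg _) (h.norm_w_le j)
  calc ‖S (j + 1) - S j‖ ≤ c₀ ^ 2 ^ j * (‖(y j).smulRight (w j)‖ * ‖S j‖) := by
        rw [hdiff, norm_smul, Real.norm_of_nonneg (by positivity)]
        gcongr
        exact ContinuousLinearMap.opNorm_comp_le _ _
    _ ≤ c₀ ^ 2 ^ j * ‖S j‖ := by gcongr; exact mul_le_of_le_one_left (norm_nonneg _) hrank

theorem norm_comp_succ_le (h : IsLindenstraussSeq c₀ S u w y) (hc₀ : 0 < c₀) (j : ℕ)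
    {y' : StrongDual ℝ Y} (hy' : ‖y'‖ ≤ 1) :
    ‖y'.comp (S (j + 1))‖ ≤ (1 + c₀ ^ 2 ^ j * |y' (w j)|) * ‖S j‖ := by
  have hcomp : y'.comp (S (j + 1)) =
      y'.comp (S j) + (c₀ ^ 2 ^ j * y' (w j)) • (y j).comp (S j) := by
    ext x
    simp only [ContinuousLinearMap.comp_apply, h.succ_apply, map_add, map_smul, smul_eq_mul,
      add_apply, smul_apply, add_right_inj]
    ring
  have hnorm : ∀ z : StrongDual ℝ Y, ‖z‖ ≤ 1 → ‖z.comp (S j)‖ ≤ ‖S j‖ := fun z hz =>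
    (z.opNorm_comp_le _).trans (mul_le_of_le_one_left (norm_nonneg _) hz)
  calc ‖y'.comp (S (j + 1))‖
      ≤ ‖y'.comp (S j)‖ + |c₀ ^ 2 ^ j * y' (w j)| * ‖(y j).comp (S j)‖ := by
        rw [hcomp, ← Real.norm_eq_abs, ← norm_smul]; exact norm_add_le _ _
    _ ≤ ‖S j‖ + c₀ ^ 2 ^ j * |y' (w j)| * ‖S j‖ := by
        rw [abs_mul, abs_of_pos (by positivity)]
        gcongr
        exacts [hnorm y' hy', hnorm (y j) (h.norm_y_le j)]
    _ = (1 + c₀ ^ 2 ^ j * |y' (w j)|) * ‖S j‖ := by ring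

theorem le_norm_comp (h : IsLindenstraussSeq c₀ S u w y) (j : ℕ) :
    (1 - c₀ ^ 2 ^ (j + 1)) * ‖S j‖ ≤ ‖(y j).comp (S j)‖ := by
  calc (1 - c₀ ^ 2 ^ (j + 1)) * ‖S j‖ ≤ ‖S j (u j)‖ := h.le_norm_apply_u j
    _ = ‖(y j).comp (S j) (u j)‖ := by simp [h.y_apply_u]
    _ ≤ ‖(y j).comp (S j)‖ := ((y j).comp (S j)).unit_le_opNorm _ (h.norm_u_le j)

theorem le_norm_succ (h : IsLindenstraussSeq c₀ S u w y) (hc₀ : 0 < c₀) (j : ℕ) :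
    (1 + c₀ ^ 2 ^ j) * (1 - c₀ ^ 2 ^ (j + 1)) * ‖S j‖ ≤ ‖S (j + 1)‖ := by
  calc (1 + c₀ ^ 2 ^ j) * (1 - c₀ ^ 2 ^ (j + 1)) * ‖S j‖
      ≤ (1 + c₀ ^ 2 ^ j) * ‖S j (u j)‖ := by
        rw [mul_assoc]; gcongr; exact h.le_norm_apply_u j
    _ = ‖S (j + 1) (u j)‖ := by
        rw [h.succ_apply_u, norm_smul, Real.norm_of_nonneg (by positivity)]
    _ ≤ ‖S (j + 1)‖ := (S (j + 1)).unit_le_opNorm _ (h.norm_u_le j)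

theorem monotone_norm (h : IsLindenstraussSeq c₀ S u w y) (hc₀ : 0 < c₀)
    (hc₀' : c₀ ≤ 1 / 8) : Monotone fun j => ‖S j‖ := by
  refine monotone_nat_of_le_succ fun j => le_trans ?_ (h.le_norm_succ hc₀ j)
  have hc : c₀ ^ 2 ^ j ≤ 1 / 8 := (pow_two_pow_le hc₀.le (by linarith) j).trans hc₀'
  have hgain : 1 ≤ (1 + c₀ ^ 2 ^ j) * (1 - c₀ ^ 2 ^ (j + 1)) := by
    rw [pow_two_pow_succ]
    nlinarith [pow_pos hc₀ (2 ^ j)]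
  nlinarith [norm_nonneg (S j)]

theorem norm_sub_le_of_le (h : IsLindenstraussSeq c₀ S u w y) (hc₀ : 0 < c₀)
    (hc₀' : c₀ ≤ 1 / 8) {n m : ℕ} (hnm : n ≤ m) : ‖S m - S n‖ ≤ 4 * c₀ ^ 2 ^ n * ‖S n‖ := by
  refine norm_sub_le_of_norm_succ_sub_le (fun k => by positivity) (fun k => ?_)
    (h.norm_succ_sub_le hc₀) (by linarith [pow_two_pow_le hc₀.le (by linarith) n]) hnm
  have := pow_two_pow_le hc₀.le (by linarith) k
  rw [pow_two_pow_succ]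
  nlinarith [pow_pos hc₀ (2 ^ k)]

theorem le_norm_comp_succ_of_lt (h : IsLindenstraussSeq c₀ S u w y) (hc₀ : 0 < c₀)
    (hc₀' : c₀ ≤ 1 / 8) {j m : ℕ} (hjm : j < m) :
    (1 - 5 * (c₀ ^ 2 ^ j) ^ 2) * ‖S (j + 1)‖ ≤ ‖(y m).comp (S (j + 1))‖ := by
  have htail := h.norm_sub_le_of_le hc₀ hc₀' (show j + 1 ≤ m from hjm)
  have hmono : ‖S (j + 1)‖ ≤ ‖S m‖ := h.monotone_norm hc₀ hc₀' hjm
  have hcm : c₀ ^ 2 ^ (m + 1) ≤ (c₀ ^ 2 ^ j) ^ 2 :=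
    (pow_two_pow_le_pow_two_pow hc₀.le (by linarith) (by omega)).trans_eq
      (pow_two_pow_succ c₀ j)
  have hnorming := h.le_norm_comp m
  have hsplit : ‖(y m).comp (S m)‖ ≤ ‖(y m).comp (S (j + 1))‖ + ‖S m - S (j + 1)‖ := by
    calc ‖(y m).comp (S m)‖
        = ‖(y m).comp (S (j + 1)) + (y m).comp (S m - S (j + 1))‖ := by
          rw [← ContinuousLinearMap.comp_add, add_sub_cancel]
      _ ≤ ‖(y m).comp (S (j + 1))‖ + ‖(y m).comp (S m - S (j + 1))‖ := norm_add_le _ _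
      _ ≤ ‖(y m).comp (S (j + 1))‖ + ‖S m - S (j + 1)‖ := by
          gcongr
          exact ((y m).opNorm_comp_le _).trans
            (mul_le_of_le_one_left (norm_nonneg _) (h.norm_y_le m))
  have hc1 : c₀ ^ 2 ^ (j + 1) ≤ 1 := by linarith [pow_two_pow_le hc₀.le (by linarith) (j + 1)]
  rw [pow_two_pow_succ] at htail hc1
  nlinarith [norm_nonneg (S (j + 1)), norm_nonneg (S m)]

theorem le_abs_apply_w (h : IsLindenstraussSeq c₀ S u w y) (hc₀ : 0 < c₀)
    (hc₀' : c₀ ≤ 1 / 8) (hS₀ : 0 < ‖S 0‖) {j m : ℕ} (hjm : j < m) :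
    1 - 8 * c₀ ^ 2 ^ j ≤ |y m (w j)| := by
  set c := c₀ ^ 2 ^ j
  have hc_pos : 0 < c := by positivity
  have hc_le : c ≤ 1 / 8 := (pow_two_pow_le hc₀.le (by linarith) j).trans hc₀'
  have ha : 0 < ‖S j‖ := hS₀.trans_le (h.monotone_norm hc₀ hc₀' (Nat.zero_le j))
  have hgrow := h.le_norm_succ hc₀ j
  rw [pow_two_pow_succ] at hgrow
  have hlow := h.le_norm_comp_succ_of_lt hc₀ hc₀' hjm
  have hup := h.norm_comp_succ_le hc₀ j (h.norm_y_le m)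
  have hprod :
      (1 - 5 * c ^ 2) * ((1 + c) * (1 - c ^ 2)) * ‖S j‖ ≤ (1 + c * |y m (w j)|) * ‖S j‖ :=
    calc (1 - 5 * c ^ 2) * ((1 + c) * (1 - c ^ 2)) * ‖S j‖
        = (1 - 5 * c ^ 2) * ((1 + c) * (1 - c ^ 2) * ‖S j‖) := by ring
      _ ≤ (1 - 5 * c ^ 2) * ‖S (j + 1)‖ := by gcongr; nlinarith
      _ ≤ (1 + c * |y m (w j)|) * ‖S j‖ := hlow.trans hup
  have hdiv := le_of_mul_le_mul_right hprod ha
  have hpoly : c * (1 - 8 * c) ≤ (1 - 5 * c ^ 2) * ((1 + c) * (1 - c ^ 2)) - 1 := by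
    nlinarith [mul_nonneg (sq_nonneg c) (by linarith : (0 : ℝ) ≤ 2 - 6 * c), pow_pos hc_pos 4,
      pow_pos hc_pos 5]
  exact le_of_mul_le_mul_left (by linarith) hc_pos

theorem sub_norm_sub_le_norm_comp (h : IsLindenstraussSeq c₀ S u w y) (hc₀ : 0 < c₀)
    (hc₀' : c₀ ≤ 1 / 8) {y' : StrongDual ℝ Y} (hy'1 : ‖y'‖ ≤ 1) (L : X →L[ℝ] Y) {j : ℕ}
    (hy'w : 1 - 8 * c₀ ^ 2 ^ j ≤ |y' (w j)|) :
    (1 - 8 * c₀ ^ 2 ^ j) * (1 - c₀ ^ 2 ^ (j + 1)) * ‖S j‖ - ‖L - S (j + 1)‖ ≤ ‖y'.comp L‖ := by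
  set c := c₀ ^ 2 ^ j
  have hc : c ≤ 1 / 8 := (pow_two_pow_le hc₀.le (by linarith) j).trans hc₀'
  have hyw : y' (S j (u j)) = ‖S j (u j)‖ * y' (w j) := by
    conv_lhs => rw [h.apply_u j]
    rw [map_smul, smul_eq_mul]
  have hval : |y' (S (j + 1) (u j))| = (1 + c) * (‖S j (u j)‖ * |y' (w j)|) := by
    rw [h.succ_apply_u, map_smul, smul_eq_mul, hyw, abs_mul, abs_mul, abs_norm,
      abs_of_nonneg (by positivity)]
  have hnear : |y' (S (j + 1) (u j))| - ‖L - S (j + 1)‖ ≤ |y' (L (u j))| := by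
    have herr : |y' (L (u j)) - y' (S (j + 1) (u j))| ≤ ‖L - S (j + 1)‖ := by
      rw [← map_sub, ← sub_apply, ← Real.norm_eq_abs, ← y'.comp_apply]
      exact ((y'.comp _).unit_le_opNorm _ (h.norm_u_le j)).trans
        ((y'.opNorm_comp_le _).trans (mul_le_of_le_one_left (norm_nonneg _) hy'1))
    linarith [abs_sub_abs_le_abs_sub (y' (S (j + 1) (u j))) (y' (L (u j))),
      abs_sub_comm (y' (S (j + 1) (u j))) (y' (L (u j)))]
  have hmain : |y' (L (u j))| ≤ ‖y'.comp L‖ := by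
    rw [← Real.norm_eq_abs, ← y'.comp_apply]
    exact (y'.comp L).unit_le_opNorm _ (h.norm_u_le j)
  have hgain : (1 - 8 * c) * (1 - c₀ ^ 2 ^ (j + 1)) * ‖S j‖ ≤ ‖S j (u j)‖ * |y' (w j)| := by
    rw [mul_assoc, mul_comm]
    exact mul_le_mul (h.le_norm_apply_u j) hy'w (by linarith) (norm_nonneg _)
  have hprod_nonneg : 0 ≤ ‖S j (u j)‖ * |y' (w j)| := by positivity
  nlinarith [pow_pos hc₀ (2 ^ j)]

theorem exists_norm_comp_eq (h : IsLindenstraussSeq c₀ S u w y) (hc₀ : 0 < c₀)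
    (hc₀' : c₀ ≤ 1 / 8) (hS₀ : 0 < ‖S 0‖) {L : X →L[ℝ] Y} (hL : Tendsto S atTop (𝓝 L)) :
    ∃ y' : StrongDual ℝ Y, ‖y'‖ ≤ 1 ∧ ‖y'.comp L‖ = ‖L‖ := by
  obtain ⟨y', hy'1, hy'lim⟩ :=
    exists_norm_le_one_forall_le_norm_apply (l := atTop) y h.norm_y_le
  have hy'w : ∀ j, 1 - 8 * c₀ ^ 2 ^ j ≤ |y' (w j)| := fun j => by
    refine hy'lim (w j) _ ?_
    filter_upwards [eventually_gt_atTop j] with m hm using h.le_abs_apply_w hc₀ hc₀' hS₀ hm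
  have hbound := fun j => h.sub_norm_sub_le_norm_comp hc₀ hc₀' hy'1 L (hy'w j)
  have hlim : Tendsto (fun j => (1 - 8 * c₀ ^ 2 ^ j) * (1 - c₀ ^ 2 ^ (j + 1)) * ‖S j‖ -
      ‖L - S (j + 1)‖) atTop (𝓝 ‖L‖) := by
    have hc := tendsto_pow_two_pow_atTop hc₀.le (by linarith)
    have hS1 : Tendsto (fun j => ‖L - S (j + 1)‖) atTop (𝓝 0) := by
      simpa using ((hL.comp (tendsto_add_atTop_nat 1)).const_sub L).norm
    simpa using (((hc.const_mul 8).const_sub 1).mul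
      ((hc.comp (tendsto_add_atTop_nat 1)).const_sub 1)).mul hL.norm |>.sub hS1
  refine ⟨y', hy'1, le_antisymm ?_ (le_of_tendsto' hlim hbound)⟩
  exact (y'.opNorm_comp_le L).trans (mul_le_of_le_one_left (norm_nonneg _) hy'1)

end IsLindenstraussSeq

theorem exists_norm_sub_lt_ker_le_norm_comp_eq [CompleteSpace Y] (T : X →L[ℝ] Y) {ε : ℝ}
    (hε : 0 < ε) :
    ∃ (S : X →L[ℝ] Y) (y : StrongDual ℝ Y), ‖T - S‖ < ε ∧
      LinearMap.ker (T : X →ₗ[ℝ] Y) ≤ LinearMap.ker (S : X →ₗ[ℝ] Y) ∧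
      ‖y‖ ≤ 1 ∧ ‖y.comp S‖ = ‖S‖ := by
  rcases eq_or_ne T 0 with rfl | hT
  · exact ⟨0, 0, by simpa using hε, le_rfl, by simp, by simp⟩
  have hT' : 0 < ‖T‖ := norm_pos_iff.mpr hT
  set c₀ := min (1 / 8) (ε / (8 * ‖T‖))
  have hc₀ : 0 < c₀ := lt_min (by norm_num) (by positivity)
  have hc₀' : c₀ ≤ 1 / 8 := min_le_left _ _
  have hc₀ε : 4 * c₀ * ‖T‖ < ε := by
    have : c₀ * (8 * ‖T‖) ≤ ε := (le_div_iff₀ (by positivity)).mp (min_le_right _ _)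
    nlinarith
  obtain ⟨S, u, w, y, hS₀, h⟩ := exists_isLindenstraussSeq T hc₀
  have hc_le : ∀ k, c₀ ^ 2 ^ k ≤ 1 / 8 := fun k =>
    (pow_two_pow_le hc₀.le (by linarith) k).trans hc₀'
  obtain ⟨L, hL, hLS⟩ := exists_tendsto_of_norm_succ_sub_le (fun k => by positivity)
    (fun k => by rw [pow_two_pow_succ]; nlinarith [hc_le k, pow_pos hc₀ (2 ^ k)])
    (fun k => (hc_le k).trans (by norm_num)) (tendsto_pow_two_pow_atTop hc₀.le (by linarith))
    (h.norm_succ_sub_le hc₀)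
  obtain ⟨y', hy'1, hy'L⟩ := h.exists_norm_comp_eq hc₀ hc₀' (hS₀ ▸ hT') hL
  refine ⟨L, y', ?_, fun z hz => ker_le_of_tendsto h.ker_le hL (hS₀ ▸ hz), hy'1, hy'L⟩
  have hLT := hLS 0
  rw [hS₀, pow_zero, pow_one] at hLT
  rw [norm_sub_rev]
  linarith

end Lindenstrauss

theorem statement_12_general
    {X Y : Type*} [NormedAddCommGroup X] [NormedSpace ℝ X]
    [NormedAddCommGroup Y] [NormedSpace ℝ Y] [CompleteSpace Y]
    (T : X →L[ℝ] Y)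
    (hNA : ∀ f : X →L[ℝ] ℝ, (∀ z ∈ LinearMap.ker (T : X →ₗ[ℝ] Y), f z = 0) →
      ∃ x : X, ‖x‖ = 1 ∧ |f x| = ‖f‖) :
    ∀ ε : ℝ, 0 < ε → ∃ S : X →L[ℝ] Y,
      (∃ x : X, ‖x‖ = 1 ∧ ‖S x‖ = ‖S‖) ∧
      LinearMap.ker (T : X →ₗ[ℝ] Y) ≤ LinearMap.ker (S : X →ₗ[ℝ] Y) ∧ ‖T - S‖ < ε := by
  intro ε hε
  obtain ⟨S, y, hTS, hker, hy, hyS⟩ := exists_norm_sub_lt_ker_le_norm_comp_eq T hε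
  obtain ⟨x, hx, hyx⟩ := hNA (y.comp S) fun z hz => by
    simp [show S z = 0 from hker hz]
  refine ⟨S, ⟨x, hx, le_antisymm (S.unit_le_opNorm x hx.le) ?_⟩, hker, hTS⟩
  calc ‖S‖ = |y (S x)| := by rw [← hyS, ← hyx]; rfl
    _ ≤ ‖y‖ * ‖S x‖ := by rw [← Real.norm_eq_abs]; exact y.le_opNorm _
    _ ≤ ‖S x‖ := mul_le_of_le_one_left (norm_nonneg _) hy

theorem statement_12
    {X Y : Type*} [NormedAddCommGroup X] [NormedSpace ℝ X] [CompleteSpace X]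
    [NormedAddCommGroup Y] [NormedSpace ℝ Y] [CompleteSpace Y]
    (T : X →L[ℝ] Y)
    (hNA : ∀ f : X →L[ℝ] ℝ, (∀ z ∈ LinearMap.ker (T : X →ₗ[ℝ] Y), f z = 0) →
      ∃ x : X, ‖x‖ = 1 ∧ |f x| = ‖f‖) :
    ∀ ε : ℝ, 0 < ε → ∃ S : X →L[ℝ] Y,
      (∃ x : X, ‖x‖ = 1 ∧ ‖S x‖ = ‖S‖) ∧
      LinearMap.ker (T : X →ₗ[ℝ] Y) ≤ LinearMap.ker (S : X →ₗ[ℝ] Y) ∧ ‖T - S‖ < ε :=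
  statement_12_general T hNA
end

section
/- Let X be a Banach space, z₀ ∈ X, and f, g ∈ X* linearly independent. Put M = ker f ∩ ker g. Then dist(z₀, M) = sup over (t,s) ∈ ℝ² \ {(0,0)} of |t f(z₀) + s g(z₀)| / ‖t f + s g‖. -/
/-!
Every functional `h` vanishing on `M` satisfies `|h z₀| ≤ ‖h‖ · dist(z₀, M)`, so the distance
dominates the supremum.
Conversely, Hahn–Banach in the quotient `X ⧸ M` (whose norm is the distance to `M`) yields a
functional of norm at most one that vanishes on `M` and takes the value `dist(z₀, M)` at `z₀`;
any functional vanishing on `ker f ∩ ker g` is a combination `t f + s g`.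
-/

open Metric

theorem LinearMap.exists_eq_smul_add_smul_of_ker_inf_ker_le {K V : Type*} [Field K]
    [AddCommGroup V] [Module K V] {f g h : V →ₗ[K] K} (hker : ker f ⊓ ker g ≤ ker h) :
    ∃ t s : K, t • f + s • g = h := by
  have hiInf : ⨅ i, ker (![f, g] i) ≤ ker h := by
    intro x hx
    rw [Submodule.mem_iInf] at hx
    exact hker ⟨hx 0, hx 1⟩
  have hspan := mem_span_of_iInf_ker_le_ker hiInf
  rw [Matrix.range_cons_cons_empty, Submodule.mem_span_pair] at hspan
  exact hspan

section InfDist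

variable {𝕜 X : Type*} [SeminormedAddCommGroup X]

theorem ContinuousLinearMap.norm_apply_div_norm_le_infDist [NontriviallyNormedField 𝕜]
    [NormedSpace 𝕜 X] {M : Submodule 𝕜 X} {h : X →L[𝕜] 𝕜}
    (hM : M ≤ LinearMap.ker (h : X →ₗ[𝕜] 𝕜)) (z : X) :
    ‖h z‖ / ‖h‖ ≤ infDist z (M : Set X) := by
  refine (le_infDist ⟨0, M.zero_mem⟩).2 fun m hm => ?_
  refine div_le_of_le_mul₀ (norm_nonneg _) dist_nonneg ?_
  have hm0 : h m = 0 := hM hm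
  calc ‖h z‖ = ‖h (z - m)‖ := by rw [map_sub, hm0, sub_zero]
    _ ≤ ‖h‖ * ‖z - m‖ := h.le_opNorm _
    _ = dist z m * ‖h‖ := by rw [dist_eq_norm, mul_comm]

theorem Submodule.exists_norm_le_one_apply_eq_infDist [RCLike 𝕜] [NormedSpace 𝕜 X]
    (M : Submodule 𝕜 X) (z : X) :
    ∃ h : X →L[𝕜] 𝕜, M ≤ LinearMap.ker (h : X →ₗ[𝕜] 𝕜) ∧ ‖h‖ ≤ 1 ∧
      h z = (infDist z (M : Set X) : 𝕜) := by
  obtain ⟨φ, hφ, hφz⟩ := exists_dual_vector'' 𝕜 (M.mkQ z)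
  have hbound : ∀ x, ‖(φ.toLinearMap ∘ₗ M.mkQ) x‖ ≤ 1 * ‖x‖ := fun x =>
    calc ‖φ (M.mkQ x)‖ ≤ ‖φ‖ * ‖M.mkQ x‖ := φ.le_opNorm _
      _ ≤ 1 * ‖x‖ := mul_le_mul hφ (Quotient.norm_mk_le M x) (norm_nonneg _) zero_le_one
  refine ⟨(φ.toLinearMap ∘ₗ M.mkQ).mkContinuous 1 hbound, fun m hm => ?_,
    LinearMap.mkContinuous_norm_le _ zero_le_one _, ?_⟩
  · simp [(Quotient.mk_eq_zero M).2 hm]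
  · have hnorm : ‖M.mkQ z‖ = infDist z (M : Set X) :=
      QuotientAddGroup.norm_mk (S := M.toAddSubgroup) z
    rw [← hnorm]
    exact hφz

theorem Submodule.exists_infDist_eq_norm_apply_div_norm [RCLike 𝕜] [NormedSpace 𝕜 X]
    (M : Submodule 𝕜 X) (z : X) :
    ∃ h : X →L[𝕜] 𝕜, M ≤ LinearMap.ker (h : X →ₗ[𝕜] 𝕜) ∧
      infDist z (M : Set X) = ‖h z‖ / ‖h‖ := by
  obtain ⟨h, hM, hnorm, hz⟩ := M.exists_norm_le_one_apply_eq_infDist z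
  refine ⟨h, hM, le_antisymm ?_ (h.norm_apply_div_norm_le_infDist hM z)⟩
  have hdist : ‖h z‖ = infDist z (M : Set X) := by
    rw [hz, RCLike.norm_ofReal, abs_of_nonneg infDist_nonneg]
  rcases (norm_nonneg h).eq_or_lt with h0 | hpos
  · -- `‖h‖ = 0` forces `‖h z‖ = 0`, and the quotient is `0 / 0 = 0`.
    have hz0 := h.le_opNorm z
    rw [← h0, zero_mul] at hz0
    rw [← hdist, ← h0, div_zero]
    exact hz0
  · rw [hdist, le_div_iff₀ hpos]
    exact mul_le_of_le_one_right infDist_nonneg hnorm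

end InfDist

theorem statement_14_general
    {X : Type*} [NormedAddCommGroup X] [NormedSpace ℝ X]
    (z₀ : X) (f g : X →L[ℝ] ℝ) :
    Metric.infDist z₀ ((LinearMap.ker (f : X →ₗ[ℝ] ℝ) ⊓ LinearMap.ker (g : X →ₗ[ℝ] ℝ) : Submodule ℝ X) : Set X)
      = ⨆ p : {p : ℝ × ℝ // p ≠ 0},
          |p.1.1 * f z₀ + p.1.2 * g z₀| / ‖p.1.1 • f + p.1.2 • g‖ := by
  set M := LinearMap.ker (f : X →ₗ[ℝ] ℝ) ⊓ LinearMap.ker (g : X →ₗ[ℝ] ℝ)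
  have hM_le (t s : ℝ) : M ≤ LinearMap.ker ((t • f + s • g : X →L[ℝ] ℝ) : X →ₗ[ℝ] ℝ) :=
    fun x hx => by simp [LinearMap.mem_ker.1 hx.1, LinearMap.mem_ker.1 hx.2]
  have hterm (p : {p : ℝ × ℝ // p ≠ 0}) :
      |p.1.1 * f z₀ + p.1.2 * g z₀| / ‖p.1.1 • f + p.1.2 • g‖ ≤ infDist z₀ (M : Set X) := by
    simpa using (p.1.1 • f + p.1.2 • g).norm_apply_div_norm_le_infDist (hM_le _ _) z₀
  have : Nonempty {p : ℝ × ℝ // p ≠ 0} := ⟨⟨(1, 0), by simp⟩⟩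
  refine le_antisymm ?_ (ciSup_le hterm)
  obtain ⟨h, hM, hdist⟩ := M.exists_infDist_eq_norm_apply_div_norm z₀
  obtain ⟨t, s, hts⟩ := LinearMap.exists_eq_smul_add_smul_of_ker_inf_ker_le hM
  obtain rfl : t • f + s • g = h := ContinuousLinearMap.coe_injective (by simpa using hts)
  rcases eq_or_ne (t, s) 0 with h0 | h0
  · obtain ⟨rfl, rfl⟩ := Prod.mk_eq_zero.1 h0
    rw [hdist]
    simpa using Real.iSup_nonneg fun p : {p : ℝ × ℝ // p ≠ 0} => by positivity
  · rw [hdist]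
    simpa using le_ciSup ⟨_, Set.forall_mem_range.2 hterm⟩ (⟨(t, s), h0⟩ : {p : ℝ × ℝ // p ≠ 0})

theorem statement_14
    {X : Type*} [NormedAddCommGroup X] [NormedSpace ℝ X] [CompleteSpace X]
    (z₀ : X) (f g : X →L[ℝ] ℝ) (hind : LinearIndependent ℝ ![f, g]) :
    Metric.infDist z₀ ((LinearMap.ker (f : X →ₗ[ℝ] ℝ) ⊓ LinearMap.ker (g : X →ₗ[ℝ] ℝ) : Submodule ℝ X) : Set X)
      = ⨆ p : {p : ℝ × ℝ // p ≠ 0},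
          |p.1.1 * f z₀ + p.1.2 * g z₀| / ‖p.1.1 • f + p.1.2 • g‖ :=
  statement_14_general z₀ f g
end

section
/- Let X be a Banach space, f ∈ X* with ‖f‖ = 1, h ∈ X* with ‖h‖ ≤ 1, h ≠ 0, and suppose there exist K, ε > 0 such that ‖f + t h‖ ≤ 1 + K t² for all t ∈ (−ε, ε). Then there exists 0 < s ≤ 1 such that ‖f + t s h‖ ≤ √(1 + t²) for all t ∈ ℝ. -/
/-!
Take `s ≤ min (1/3, ε)` with `K s² ≤ 1/4`. For `|t| < 1` the point `t s` lies in `(-ε, ε)`, so the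
quadratic bound gives `‖f + t s h‖ ≤ 1 + t²/4 ≤ √(1 + t²)`. For `|t| ≥ 1` the triangle inequality
gives `‖f + t s h‖ ≤ 1 + |t| s`, and `(1 + |t| s)² ≤ 1 + t²` as soon as `s ≤ 1/3` and `|t| ≥ 3/4`.
-/

lemma one_add_sq_div_four_le_sqrt_one_add_sq {t : ℝ} (ht : t ^ 2 ≤ 8) :
    1 + t ^ 2 / 4 ≤ √(1 + t ^ 2) :=
  Real.le_sqrt_of_sq_le (by nlinarith [mul_nonneg (sq_nonneg t) (sub_nonneg.mpr ht)])

lemma one_add_abs_mul_le_sqrt_one_add_sq {s t : ℝ} (hs0 : 0 ≤ s) (hs : s ≤ 1 / 3)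
    (ht : 3 / 4 ≤ |t|) : 1 + |t| * s ≤ √(1 + t ^ 2) := by
  refine Real.le_sqrt_of_sq_le ?_
  rw [← sq_abs t]
  nlinarith [mul_nonneg (abs_nonneg t) hs0, mul_nonneg (sub_nonneg.mpr ht) (sub_nonneg.mpr hs)]

theorem norm_add_smul_smul_le_sqrt_one_add_sq {E : Type*} [SeminormedAddCommGroup E]
    [NormedSpace ℝ E] {x y : E} {K ε s : ℝ} (hx : ‖x‖ ≤ 1) (hy : ‖y‖ ≤ 1)
    (hquad : ∀ t ∈ Set.Ioo (-ε) ε, ‖x + t • y‖ ≤ 1 + K * t ^ 2)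
    (hs0 : 0 < s) (hs : s ≤ 1 / 3) (hsε : s ≤ ε) (hKs : K * s ^ 2 ≤ 1 / 4) (t : ℝ) :
    ‖x + t • s • y‖ ≤ √(1 + t ^ 2) := by
  rw [smul_smul]
  rcases lt_or_ge |t| 1 with ht | ht
  · have hts : t * s ∈ Set.Ioo (-ε) ε := by
      rw [Set.mem_Ioo, ← abs_lt, abs_mul, abs_of_pos hs0]
      exact (mul_lt_of_lt_one_left hs0 ht).trans_le hsε
    have ht_sq : t ^ 2 ≤ 8 := by nlinarith [sq_abs t, abs_nonneg t]
    calc ‖x + (t * s) • y‖ ≤ 1 + K * (t * s) ^ 2 := hquad _ hts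
      _ ≤ 1 + t ^ 2 / 4 := by nlinarith [mul_le_mul_of_nonneg_left hKs (sq_nonneg t)]
      _ ≤ √(1 + t ^ 2) := one_add_sq_div_four_le_sqrt_one_add_sq ht_sq
  · calc ‖x + (t * s) • y‖ ≤ ‖x‖ + |t| * s * ‖y‖ := by
          simpa only [norm_smul, Real.norm_eq_abs, abs_mul, abs_of_pos hs0]
            using norm_add_le x ((t * s) • y)
      _ ≤ 1 + |t| * s := add_le_add hx (mul_le_of_le_one_right (by positivity) hy)
      _ ≤ √(1 + t ^ 2) := one_add_abs_mul_le_sqrt_one_add_sq hs0.le hs (by linarith)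

theorem statement_16_general
    {X : Type*} [NormedAddCommGroup X] [NormedSpace ℝ X]
    (f h : X →L[ℝ] ℝ) (hf : ‖f‖ = 1) (hh : ‖h‖ ≤ 1)
    (K ε : ℝ) (hK : 0 < K) (hε : 0 < ε)
    (hineq : ∀ t : ℝ, t ∈ Set.Ioo (-ε) ε → ‖f + t • h‖ ≤ 1 + K * t ^ 2) :
    ∃ s : ℝ, 0 < s ∧ s ≤ 1 ∧
      ∀ t : ℝ, ‖f + t • s • h‖ ≤ Real.sqrt (1 + t ^ 2) := by
  set s := min (1 / 3 : ℝ) (min ε (1 / (4 * K)))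
  have hs0 : 0 < s := lt_min (by norm_num) (lt_min hε (by positivity))
  have hs : s ≤ 1 / 3 := min_le_left _ _
  have hsε : s ≤ ε := (min_le_right _ _).trans (min_le_left _ _)
  have hKs : K * s ^ 2 ≤ 1 / 4 := by
    have hsK : s * (4 * K) ≤ 1 :=
      (le_div_iff₀ (by positivity)).mp ((min_le_right _ _).trans (min_le_right _ _))
    nlinarith
  exact ⟨s, hs0, hs.trans (by norm_num),
    norm_add_smul_smul_le_sqrt_one_add_sq hf.le hh hineq hs0 hs hsε hKs⟩

theorem statement_16
    {X : Type*} [NormedAddCommGroup X] [NormedSpace ℝ X] [CompleteSpace X]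
    (f h : X →L[ℝ] ℝ) (hf : ‖f‖ = 1) (hh : ‖h‖ ≤ 1) (hh0 : h ≠ 0)
    (K ε : ℝ) (hK : 0 < K) (hε : 0 < ε)
    (hineq : ∀ t : ℝ, t ∈ Set.Ioo (-ε) ε → ‖f + t • h‖ ≤ 1 + K * t ^ 2) :
    ∃ s : ℝ, 0 < s ∧ s ≤ 1 ∧
      ∀ t : ℝ, ‖f + t • s • h‖ ≤ Real.sqrt (1 + t ^ 2) :=
  statement_16_general f h hf hh K ε hK hε hineq
end

section
/- Let X be a real Banach space and f ∈ X* with ‖f‖ = 1. There exists g ∈ X*, g ≠ 0, linearly independent from f, with the rank-two operator x ↦ (f(x), g(x)) from X to Euclidean ℝ² having operator norm at most 1, if and only if the operator x ↦ (f(x), 0) is not an extreme point of the closed unit ball of the space of bounded operators from X to Euclidean ℝ². -/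
/-!
If `‖(f, g)‖ ≤ 1` with `g ≠ 0`, then `(f, 0)` is the midpoint of `(f, g)` and `(f, -g)`.
Conversely, a point `P` of a convex set fails to be extreme exactly when `P ± D` lie in the set
for some `D ≠ 0`. For `P = (f, 0)` and `D = (d₀, d₁)`, the parallelogram law in `ℓ₂²` turns
`‖P ± D‖ ≤ 1` into `f(x)² + d₀(x)² + d₁(x)² ≤ ‖x‖²`, so a nonzero coordinate of `D` is a valid `g`.
Linear independence comes for free: `f = a • g` would give `(1 + a²)‖g‖² ≤ 1 = a²‖g‖²`.
-/

/-- The operator `x ↦ (f x, g x)` from `X` into the Euclidean plane. -/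
noncomputable def pairOperator {X : Type*} [NormedAddCommGroup X] [NormedSpace ℝ X]
    (f g : X →L[ℝ] ℝ) : X →L[ℝ] EuclideanSpace ℝ (Fin 2) :=
  (((EuclideanSpace.equiv (Fin 2) ℝ).symm :
      (Fin 2 → ℝ) ≃L[ℝ] EuclideanSpace ℝ (Fin 2)) :
      (Fin 2 → ℝ) →L[ℝ] EuclideanSpace ℝ (Fin 2)).comp
    (ContinuousLinearMap.pi ![f, g])

theorem Convex.mem_extremePoints_iff_forall_add_mem_sub_mem {𝕜 E : Type*} [Field 𝕜]
    [LinearOrder 𝕜] [IsStrictOrderedRing 𝕜] [AddCommGroup E] [Module 𝕜 E] {A : Set E} {x : E}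
    (hA : Convex 𝕜 A) :
    x ∈ A.extremePoints 𝕜 ↔ x ∈ A ∧ ∀ d, x + d ∈ A → x - d ∈ A → d = 0 := by
  refine and_congr_right fun hx => ⟨fun h d hplus hminus => ?_, fun h x₁ hx₁ x₂ hx₂ hseg => ?_⟩
  · have hmid : x ∈ openSegment 𝕜 (x + d) (x - d) :=
      ⟨1 / 2, 1 / 2, by norm_num, by norm_num, by norm_num, by module⟩
    simpa using h hplus hminus hmid
  · obtain ⟨a, b, ha, hb, hab, rfl⟩ := hseg
    obtain rfl : b = 1 - a := by linear_combination hab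
    -- `x ± a(1-a)(x₁ - x₂)` lie on the segments from `x` to `x₁` and to `x₂`
    have hd := h ((a * (1 - a)) • (x₁ - x₂))
      (by convert hA.add_smul_sub_mem hx hx₁ ⟨ha.le, by linarith⟩ using 1; module)
      (by convert hA.add_smul_sub_mem hx hx₂ ⟨hb.le, by linarith⟩ using 1; module)
    obtain rfl : x₁ = x₂ := sub_eq_zero.mp ((smul_eq_zero.mp hd).resolve_left (by positivity))
    module

section PairOperator

variable {X : Type*} [NormedAddCommGroup X] [NormedSpace ℝ X]

@[simp]
theorem pairOperator_apply_zero (f g : X →L[ℝ] ℝ) (x : X) : pairOperator f g x 0 = f x := by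
  simp [pairOperator]

@[simp]
theorem pairOperator_apply_one (f g : X →L[ℝ] ℝ) (x : X) : pairOperator f g x 1 = g x := by
  simp [pairOperator]

theorem ext_of_apply_zero_of_apply_one {S T : X →L[ℝ] EuclideanSpace ℝ (Fin 2)}
    (h₀ : ∀ x, S x 0 = T x 0) (h₁ : ∀ x, S x 1 = T x 1) : S = T := by
  ext x i
  fin_cases i
  exacts [h₀ x, h₁ x]

theorem pairOperator_add (f g f' g' : X →L[ℝ] ℝ) :
    pairOperator f g + pairOperator f' g' = pairOperator (f + f') (g + g') :=
  ext_of_apply_zero_of_apply_one (by simp) (by simp)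

theorem pairOperator_sub (f g f' g' : X →L[ℝ] ℝ) :
    pairOperator f g - pairOperator f' g' = pairOperator (f - f') (g - g') :=
  ext_of_apply_zero_of_apply_one (by simp) (by simp)

theorem pairOperator_eq_zero_iff {f g : X →L[ℝ] ℝ} : pairOperator f g = 0 ↔ f = 0 ∧ g = 0 := by
  refine ⟨fun h => ⟨?_, ?_⟩, fun ⟨hf, hg⟩ => ext_of_apply_zero_of_apply_one (by simp [hf]) (by simp [hg])⟩ <;>
    ext x
  · simpa using congr($h x 0)
  · simpa using congr($h x 1)

theorem exists_pairOperator_eq (T : X →L[ℝ] EuclideanSpace ℝ (Fin 2)) :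
    ∃ f g, pairOperator f g = T :=
  ⟨(EuclideanSpace.proj 0).comp T, (EuclideanSpace.proj 1).comp T,
    ext_of_apply_zero_of_apply_one (by simp) (by simp)⟩

theorem norm_pairOperator_apply_sq (f g : X →L[ℝ] ℝ) (x : X) :
    ‖pairOperator f g x‖ ^ 2 = f x ^ 2 + g x ^ 2 := by
  simp [EuclideanSpace.real_norm_sq_eq, Fin.sum_univ_two]

theorem norm_pairOperator_le_one_iff {f g : X →L[ℝ] ℝ} :
    ‖pairOperator f g‖ ≤ 1 ↔ ∀ x, f x ^ 2 + g x ^ 2 ≤ ‖x‖ ^ 2 := by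
  simp only [ContinuousLinearMap.opNorm_le_iff zero_le_one, one_mul, ← norm_pairOperator_apply_sq]
  exact forall_congr' fun x => (sq_le_sq₀ (norm_nonneg _) (norm_nonneg _)).symm

end PairOperator

theorem norm_apply_sq_add_norm_apply_sq_le {X F : Type*} [NormedAddCommGroup X] [NormedSpace ℝ X]
    [NormedAddCommGroup F] [InnerProductSpace ℝ F] {S T : X →L[ℝ] F} {c : ℝ}
    (hadd : ‖S + T‖ ≤ c) (hsub : ‖S - T‖ ≤ c) (x : X) :
    ‖S x‖ ^ 2 + ‖T x‖ ^ 2 ≤ c ^ 2 * ‖x‖ ^ 2 := by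
  have hc : 0 ≤ c := (norm_nonneg _).trans hadd
  have hplus : ‖S x + T x‖ ^ 2 ≤ (c * ‖x‖) ^ 2 :=
    pow_le_pow_left₀ (norm_nonneg _) (ContinuousLinearMap.le_of_opNorm_le _ hadd x) 2
  have hminus : ‖S x - T x‖ ^ 2 ≤ (c * ‖x‖) ^ 2 :=
    pow_le_pow_left₀ (norm_nonneg _) (ContinuousLinearMap.le_of_opNorm_le _ hsub x) 2
  nlinarith [parallelogram_law_with_norm ℝ (S x) (T x)]

theorem ContinuousLinearMap.mul_norm_sq_le_one {X : Type*} [NormedAddCommGroup X]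
    [NormedSpace ℝ X] {φ : X →L[ℝ] ℝ} {k : ℝ} (hk : 0 < k) (h : ∀ x, k * φ x ^ 2 ≤ ‖x‖ ^ 2) :
    k * ‖φ‖ ^ 2 ≤ 1 := by
  have hφ : ‖φ‖ ≤ √k⁻¹ := φ.opNorm_le_bound (Real.sqrt_nonneg _) fun x => by
    rw [Real.norm_eq_abs, ← Real.sqrt_sq_eq_abs, ← Real.sqrt_sq (norm_nonneg x), ← Real.sqrt_mul']
    · exact Real.sqrt_le_sqrt (by rw [inv_mul_eq_div, le_div_iff₀' hk]; exact h x)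
    · positivity
  calc k * ‖φ‖ ^ 2 ≤ k * √k⁻¹ ^ 2 := by gcongr
    _ = 1 := by rw [Real.sq_sqrt (by positivity), mul_inv_cancel₀ hk.ne']

theorem linearIndependent_of_sq_add_sq_le {X : Type*} [NormedAddCommGroup X] [NormedSpace ℝ X]
    {f g : X →L[ℝ] ℝ} (hf : ‖f‖ = 1) (hg : g ≠ 0) (h : ∀ x, f x ^ 2 + g x ^ 2 ≤ ‖x‖ ^ 2) :
    LinearIndependent ℝ ![f, g] := by
  rw [linearIndependent_fin2]
  refine ⟨by simpa using hg, fun a ha => ?_⟩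
  simp only [Matrix.cons_val_one, Matrix.cons_val_zero] at ha
  subst ha
  have hg₁ := ContinuousLinearMap.mul_norm_sq_le_one (φ := g) (k := 1 + a ^ 2) (by positivity)
    fun x => by simpa [mul_pow, add_mul, add_comm] using h x
  have hg₀ : 0 < ‖g‖ := norm_pos_iff.mpr hg
  rw [norm_smul, Real.norm_eq_abs] at hf
  nlinarith [sq_abs a]

theorem statement_19_general
    {X : Type*} [NormedAddCommGroup X] [NormedSpace ℝ X]
    (f : X →L[ℝ] ℝ) (hf : ‖f‖ = 1) :
    (∃ g : X →L[ℝ] ℝ, g ≠ 0 ∧ LinearIndependent ℝ ![f, g] ∧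
        ‖pairOperator f g‖ ≤ 1) ↔
      pairOperator f 0 ∉ Set.extremePoints ℝ
        (Metric.closedBall (0 : X →L[ℝ] EuclideanSpace ℝ (Fin 2)) 1) := by
  have hP : pairOperator f 0 ∈ Metric.closedBall (0 : X →L[ℝ] EuclideanSpace ℝ (Fin 2)) 1 := by
    rw [mem_closedBall_zero_iff, norm_pairOperator_le_one_iff]
    intro x
    obtain ⟨hlow, hupp⟩ := abs_le.mp (by simpa [hf] using f.le_opNorm x)
    simpa using sq_le_sq' hlow hupp
  simp only [(convex_closedBall _ _).mem_extremePoints_iff_forall_add_mem_sub_mem, hP, true_and,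
    not_forall, mem_closedBall_zero_iff]
  constructor
  · rintro ⟨g, hg, -, hfg⟩
    refine ⟨pairOperator 0 g, ?_, ?_, by simp [pairOperator_eq_zero_iff, hg]⟩
    · simpa [pairOperator_add] using hfg
    · rw [pairOperator_sub, norm_pairOperator_le_one_iff]
      simpa [norm_pairOperator_le_one_iff] using hfg
  · rintro ⟨D, hadd, hsub, hD⟩
    have hsq := norm_apply_sq_add_norm_apply_sq_le hadd hsub
    obtain ⟨d₀, d₁, rfl⟩ := exists_pairOperator_eq D
    simp only [norm_pairOperator_apply_sq, one_pow, one_mul] at hsq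
    obtain ⟨g, hg, hfg⟩ : ∃ g : X →L[ℝ] ℝ, g ≠ 0 ∧ ∀ x, f x ^ 2 + g x ^ 2 ≤ ‖x‖ ^ 2 := by
      by_cases hd₁ : d₁ = 0
      · refine ⟨d₀, fun hd₀ => hD (pairOperator_eq_zero_iff.mpr ⟨hd₀, hd₁⟩), fun x => ?_⟩
        simpa [hd₁] using hsq x
      · exact ⟨d₁, hd₁, fun x => by nlinarith [hsq x, sq_nonneg (d₀ x)]⟩
    exact ⟨g, hg, linearIndependent_of_sq_add_sq_le hf hg hfg, norm_pairOperator_le_one_iff.mpr hfg⟩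

theorem statement_19
    {X : Type*} [NormedAddCommGroup X] [NormedSpace ℝ X] [CompleteSpace X]
    (f : X →L[ℝ] ℝ) (hf : ‖f‖ = 1) :
    (∃ g : X →L[ℝ] ℝ, g ≠ 0 ∧ LinearIndependent ℝ ![f, g] ∧
        ‖pairOperator f g‖ ≤ 1) ↔
      pairOperator f 0 ∉ Set.extremePoints ℝ
        (Metric.closedBall (0 : X →L[ℝ] EuclideanSpace ℝ (Fin 2)) 1) :=
  statement_19_general f hf
end
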